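/- arXiv:2003.08702 — 6 statements merged into one kernel-verified Lean document; each statement's English description precedes it below -/
import Mathlib

section
/- The entire function g(z) = (1 - √2·z + z²)·e^{√2·z} has Taylor expansion g(z) = 1 + Σ_{k≥3} (2^{(k-2)/2} / (k·(k-3)!))·z^k; in particular all Taylor coefficients of g at 0 are nonnegative. -/
/-! Differentiating `q(z)·e^{sz}` for a quadratic `q` gives `(q' + s q)(z)·e^{sz}`, again a
quadratic times `e^{sz}`. For `q = 1 - sz + z²` with `s² = 2` the `n`-th such quadratic is
`sⁿ((n-1)(n-2)/2 + (n-1)sz + z²)`, whose constant term vanishes at `n = 1, 2` and gives the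
coefficients `(k-1)(k-2)sᵏ/(2·k!) = 2^{(k-2)/2}/(k·(k-3)!)` for `k ≥ 3`. -/

open Complex

/-- g(z) = (1 - √2·z + z²)·e^{√2·z} -/
noncomputable def g (z : ℂ) : ℂ :=
  (1 - (Real.sqrt 2 : ℂ) * z + z ^ 2) * Complex.exp ((Real.sqrt 2 : ℂ) * z)

theorem hasDerivAt_quadratic_mul_cexp (a b c s z : ℂ) :
    HasDerivAt (fun z => (a + b * z + c * z ^ 2) * exp (s * z))
      ((a * s + b + (b * s + 2 * c) * z + c * s * z ^ 2) * exp (s * z)) z := by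
  have hq : HasDerivAt (fun z => a + b * z + c * z ^ 2) (b + 2 * c * z) z := by
    refine ((((hasDerivAt_id' z).const_mul b).const_add a).add
      ((hasDerivAt_pow 2 z).const_mul c)).congr_deriv ?_
    norm_num
    ring
  have he : HasDerivAt (fun z => exp (s * z)) (exp (s * z) * s) z := by
    simpa using ((hasDerivAt_id' z).const_mul s).cexp
  exact (hq.mul he).congr_deriv (by ring)

theorem iteratedDeriv_one_sub_mul_add_sq_mul_cexp {s : ℂ} (hs : s ^ 2 = 2) (n : ℕ) :
    iteratedDeriv n (fun z => (1 - s * z + z ^ 2) * exp (s * z)) = fun z =>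
      ((n - 1) * (n - 2) * s ^ n / 2 + (n - 1) * s ^ (n + 1) * z + s ^ n * z ^ 2) *
        exp (s * z) := by
  induction n with
  | zero => funext z; simp only [iteratedDeriv_zero, Nat.cast_zero]; ring
  | succ n ih =>
    funext z
    rw [iteratedDeriv_succ, ih, (hasDerivAt_quadratic_mul_cexp _ _ _ s z).deriv]
    push_cast
    linear_combination (-exp (s * z) * s ^ n * z) * hs

theorem iteratedDeriv_g_zero (n : ℕ) :
    iteratedDeriv n g 0 = (n - 1) * (n - 2) * (Real.sqrt 2 : ℂ) ^ n / 2 := by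
  have hs : (Real.sqrt 2 : ℂ) ^ 2 = 2 := by
    exact_mod_cast Real.sq_sqrt zero_le_two
  have := congrFun (iteratedDeriv_one_sub_mul_add_sq_mul_cexp hs n) 0
  simp only [mul_zero, zero_pow two_ne_zero, add_zero, exp_zero, mul_one] at this
  exact this

theorem Real.rpow_natCast_sub_two_div_two {x : ℝ} (hx : 0 < x) (k : ℕ) :
    x ^ (((k : ℝ) - 2) / 2) = Real.sqrt x ^ k / x := by
  rw [Real.rpow_div_two_eq_sqrt _ hx.le, Real.rpow_sub (Real.sqrt_pos.mpr hx),
    Real.rpow_natCast, Real.rpow_two, Real.sq_sqrt hx.le]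

theorem taylorCoeff_g_of_three_le (k : ℕ) (hk : 3 ≤ k) :
    iteratedDeriv k g 0 / (Nat.factorial k : ℂ) =
      (((2 : ℝ) ^ (((k : ℝ) - 2) / 2) / (k * Nat.factorial (k - 3)) : ℝ) : ℂ) := by
  obtain ⟨m, rfl⟩ : ∃ m, k = m + 3 := ⟨k - 3, by omega⟩
  have hfac : ((m + 3).factorial : ℂ) = (m + 3) * (m + 2) * (m + 1) * m.factorial := by
    simp only [Nat.factorial_succ]
    push_cast
    ring
  have hm : (m.factorial : ℂ) ≠ 0 := by exact_mod_cast m.factorial_ne_zero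
  have h1 : (m : ℂ) + 1 ≠ 0 := by exact_mod_cast m.succ_ne_zero
  have h2 : (m : ℂ) + 2 ≠ 0 := by exact_mod_cast (m + 1).succ_ne_zero
  have h3 : (m : ℂ) + 3 ≠ 0 := by exact_mod_cast (m + 2).succ_ne_zero
  rw [iteratedDeriv_g_zero, Real.rpow_natCast_sub_two_div_two two_pos, Nat.add_sub_cancel, hfac]
  push_cast
  field_simp
  ring

/-- The Taylor coefficients of g at 0 are: 1, 0, 0, and 2^{(k-2)/2}/(k·(k-3)!) for k ≥ 3;
in particular all of them are nonnegative reals. -/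
theorem stmt0 :
    iteratedDeriv 0 g 0 / (Nat.factorial 0 : ℂ) = 1 ∧
    iteratedDeriv 1 g 0 / (Nat.factorial 1 : ℂ) = 0 ∧
    iteratedDeriv 2 g 0 / (Nat.factorial 2 : ℂ) = 0 ∧
    (∀ k : ℕ, 3 ≤ k →
      iteratedDeriv k g 0 / (Nat.factorial k : ℂ) =
        (((2 : ℝ) ^ (((k : ℝ) - 2) / 2) / (k * Nat.factorial (k - 3)) : ℝ) : ℂ)) ∧
    (∀ k : ℕ, 0 ≤ (iteratedDeriv k g 0 / (Nat.factorial k : ℂ)).re ∧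
      (iteratedDeriv k g 0 / (Nat.factorial k : ℂ)).im = 0) := by
  have h0 : iteratedDeriv 0 g 0 / (Nat.factorial 0 : ℂ) = 1 := by
    norm_num [iteratedDeriv_g_zero]
  have h1 : iteratedDeriv 1 g 0 / (Nat.factorial 1 : ℂ) = 0 := by simp [iteratedDeriv_g_zero]
  have h2 : iteratedDeriv 2 g 0 / (Nat.factorial 2 : ℂ) = 0 := by
    norm_num [iteratedDeriv_g_zero]
  refine ⟨h0, h1, h2, taylorCoeff_g_of_three_le, fun k => ?_⟩
  rcases Nat.lt_or_ge k 3 with hk | hk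
  · interval_cases k <;> simp only [h0, h1, h2, one_re, one_im, zero_re, zero_im] <;> norm_num
  · rw [taylorCoeff_g_of_three_le k hk, ofReal_re, ofReal_im]
    exact ⟨by positivity, rfl⟩
end

section
/- For every r > 0, the maximum over φ ∈ [0, 2π] of |(1 - √2·r·e^{iφ} + r²·e^{2iφ})·exp(√2·r·e^{iφ})| is attained at φ = 0 and equals (1 - √2·r + r²)·e^{√2·r}. -/
open Complex

/-! With `w = √2 z` we have `g z = (1 - w + w² / 2) eʷ`, and since
`1 - n + n(n-1)/2 = (n-1)(n-2)/2 ≥ 0` for every `n : ℕ`, all Taylor coefficients of `g` at `0`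
are nonnegative reals. For such a power series the triangle inequality gives
`‖g z‖ ≤ ∑ aₙ ‖z‖ⁿ = g ‖z‖`. -/

open Nat in
theorem hasSum_descFactorial_mul_pow_div_factorial (k : ℕ) (w : ℂ) :
    HasSum (fun n => (n.descFactorial k : ℂ) * w ^ n / n !) (w ^ k * exp w) := by
  rw [← hasSum_nat_add_iff' k]
  have hvanish : ∑ i ∈ Finset.range k, (i.descFactorial k : ℂ) * w ^ i / i ! = 0 :=
    Finset.sum_eq_zero fun i hi => by
      simp [descFactorial_eq_zero_iff_lt.mpr (Finset.mem_range.mp hi)]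
  have hexp : HasSum (fun n => w ^ k * (w ^ n / n !)) (w ^ k * exp w) := by
    rw [exp_eq_exp_ℂ]; exact (NormedSpace.expSeries_div_hasSum_exp w).mul_left (w ^ k)
  rw [hvanish, sub_zero]
  refine hexp.congr_fun fun n => ?_
  have hfac : ((n + k) ! : ℂ) = n ! * (n + k).descFactorial k := by
    rw [← factorial_mul_descFactorial (Nat.le_add_left k n), Nat.add_sub_cancel]; push_cast; rfl
  have hdesc : ((n + k).descFactorial k : ℂ) ≠ 0 := by
    exact_mod_cast (descFactorial_eq_zero_iff_lt.not.mpr (by omega))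
  rw [hfac, pow_add]
  field_simp

theorem norm_le_norm_apply_norm_of_hasSum {𝕜 : Type*} [RCLike 𝕜] {a : ℕ → ℝ} (ha : ∀ n, 0 ≤ a n)
    {f : 𝕜 → 𝕜} (hf : ∀ z, HasSum (fun n => (a n : 𝕜) * z ^ n) (f z)) (z : 𝕜) :
    ‖f z‖ ≤ ‖f ‖z‖‖ := by
  obtain ⟨S, hS⟩ : Summable fun n => a n * ‖z‖ ^ n := by
    simpa only [← RCLike.ofReal_pow, ← RCLike.ofReal_mul, RCLike.summable_ofReal] using
      (hf ‖z‖).summable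
  have hfS : f ‖z‖ = S := by
    refine (hf ‖z‖).unique ?_
    simpa only [RCLike.ofReal_mul, RCLike.ofReal_pow] using (RCLike.hasSum_ofReal 𝕜).mpr hS
  rw [hfS, RCLike.norm_ofReal, abs_of_nonneg (hS.nonneg fun n => by have := ha n; positivity)]
  exact (hf z).norm_le_of_bounded hS fun n => by
    rw [norm_mul, norm_pow, RCLike.norm_ofReal, abs_of_nonneg (ha n)]

noncomputable def gCoeff (n : ℕ) : ℝ :=
  Real.sqrt 2 ^ n * (((n : ℝ) - 1) * ((n : ℝ) - 2) / (2 * n.factorial))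

theorem gCoeff_nonneg (n : ℕ) : 0 ≤ gCoeff n := by
  rcases n with _ | _ | n
  · norm_num [gCoeff]
  · norm_num [gCoeff]
  · unfold gCoeff
    push_cast
    have : (0 : ℝ) ≤ n := n.cast_nonneg
    have : (0 : ℝ) ≤ (n + 1 + 1 - 1) * (n + 1 + 1 - 2) := by nlinarith
    positivity

theorem hasSum_gCoeff_mul_pow (z : ℂ) : HasSum (fun n => (gCoeff n : ℂ) * z ^ n) (g z) := by
  set w := (Real.sqrt 2 : ℂ) * z
  have hw : z ^ 2 = w ^ 2 / 2 := by
    have : (Real.sqrt 2 : ℂ) ^ 2 = 2 := by exact_mod_cast Real.sq_sqrt zero_le_two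
    rw [mul_pow, this]; ring
  have hg : g z = w ^ 0 * exp w - w ^ 1 * exp w + w ^ 2 * exp w / 2 := by
    rw [g, hw]; ring
  rw [hg]
  refine (((hasSum_descFactorial_mul_pow_div_factorial 0 w).sub
    (hasSum_descFactorial_mul_pow_div_factorial 1 w)).add
    ((hasSum_descFactorial_mul_pow_div_factorial 2 w).div_const 2)).congr_fun fun n => ?_
  simp only [gCoeff, Nat.descFactorial_zero, Nat.descFactorial_one, Nat.cast_descFactorial_two, w]
  push_cast
  field_simp
  ring

/-- For every r > 0, the maximum over φ ∈ [0,2π] of |g(r·e^{iφ})| is attained at φ = 0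
and equals (1 - √2·r + r²)·e^{√2·r}. -/
theorem stmt1 (r : ℝ) (hr : 0 < r) :
    IsMaxOn (fun φ : ℝ => ‖g ((r : ℂ) * Complex.exp (φ * Complex.I))‖)
      (Set.Icc 0 (2 * Real.pi)) 0 ∧
    ‖g ((r : ℂ) * Complex.exp ((0 : ℝ) * Complex.I))‖
      = (1 - Real.sqrt 2 * r + r ^ 2) * Real.exp (Real.sqrt 2 * r) := by
  have hnorm (φ : ℝ) : ‖(r : ℂ) * exp (φ * I)‖ = r := by
    rw [norm_mul, norm_exp_ofReal_mul_I, mul_one, norm_real, Real.norm_of_nonneg hr.le]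
  have hmax (φ : ℝ) : ‖g ((r : ℂ) * exp (φ * I))‖ ≤ ‖g r‖ :=
    (norm_le_norm_apply_norm_of_hasSum gCoeff_nonneg hasSum_gCoeff_mul_pow _).trans_eq
      (by congr 3; exact hnorm φ)
  have hpos : 0 ≤ 1 - Real.sqrt 2 * r + r ^ 2 := by
    nlinarith [sq_nonneg (r - Real.sqrt 2 / 2), Real.sq_sqrt zero_le_two]
  have hgr : g r = ((1 - Real.sqrt 2 * r + r ^ 2) * Real.exp (Real.sqrt 2 * r) : ℝ) := by
    rw [g]; push_cast; rfl
  have h0 : (r : ℂ) * exp ((0 : ℝ) * I) = r := by simp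
  refine ⟨isMaxOn_iff.mpr fun φ _ => by simpa only [h0] using hmax φ, ?_⟩
  rw [h0, hgr, norm_real, Real.norm_of_nonneg (by positivity)]
end

section
/- The improper integral ∫₀^∞ (log(1 - √2·s + s²) + √2·s) / s³ ds converges and equals 3π/4. -/
/-!
With `q s = 1 - √2 s + s²` and `f s = log (q s) + √2 s`, one has `f 0 = 0` and
`f' s = √2 s² / q s ≥ 0`, so the integrand `f s / s³` is nonnegative on `(0, ∞)`.
Integrating by parts against `d(-1/(2s²))` leaves `√2 / (2 q s) = d/ds arctan (√2 s - 1)`, because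
`1 + (√2 s - 1)² = 2 q s`. Hence `F s = arctan (√2 s - 1) - f s / (2 s²)` is an antiderivative.
Since `f s = O(s³)` at `0` and `f s = O(s)` at `∞`, `F` runs from `-π/4` to `π/2`, and a nonnegative
derivative with a limit at infinity is integrable with integral `π/2 + π/4 = 3π/4`.
-/

open Real Set Filter MeasureTheory Topology

lemma monotoneOn_Ici_of_hasDerivAt_nonneg {g g' : ℝ → ℝ} {a : ℝ}
    (hg : ∀ x, HasDerivAt g (g' x) x) (hg' : ∀ x, a < x → 0 ≤ g' x) : MonotoneOn g (Ici a) := by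
  refine monotoneOn_of_hasDerivWithinAt_nonneg (convex_Ici a)
    (fun x _ => (hg x).continuousAt.continuousWithinAt) (fun x _ => (hg x).hasDerivWithinAt) ?_
  rw [interior_Ici]
  exact hg'

namespace SqrtTwoLogIntegral

lemma sqrt_two_sq : √2 ^ 2 = 2 := sq_sqrt zero_le_two

lemma half_le_quadratic (s : ℝ) : 1 / 2 ≤ 1 - √2 * s + s ^ 2 := by
  nlinarith [sq_nonneg (s - √2 / 2), sqrt_two_sq]

lemma quadratic_pos (s : ℝ) : 0 < 1 - √2 * s + s ^ 2 :=
  one_half_pos.trans_le (half_le_quadratic s)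

noncomputable def numerator (s : ℝ) : ℝ := log (1 - √2 * s + s ^ 2) + √2 * s

lemma numerator_zero : numerator 0 = 0 := by simp [numerator]

lemma hasDerivAt_numerator (s : ℝ) :
    HasDerivAt numerator (√2 * s ^ 2 / (1 - √2 * s + s ^ 2)) s := by
  have hq : HasDerivAt (fun s : ℝ => 1 - √2 * s + s ^ 2) (-√2 + 2 * s) s :=
    (((hasDerivAt_id s).const_mul √2).const_sub 1 |>.add (hasDerivAt_pow 2 s)).congr_deriv
      (by norm_num)
  refine ((hq.log (quadratic_pos s).ne').add ((hasDerivAt_id s).const_mul √2)).congr_deriv ?_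
  field_simp [(quadratic_pos s).ne']
  linear_combination -s * sqrt_two_sq

lemma numerator_nonneg {s : ℝ} (hs : 0 ≤ s) : 0 ≤ numerator s := by
  have hmono : MonotoneOn numerator (Ici 0) :=
    monotoneOn_Ici_of_hasDerivAt_nonneg hasDerivAt_numerator fun x _ =>
      div_nonneg (by positivity) (quadratic_pos x).le
  simpa [numerator_zero] using hmono self_mem_Ici hs hs

lemma numerator_le_cube {s : ℝ} (hs : 0 ≤ s) : numerator s ≤ s ^ 3 := by
  have hmono : MonotoneOn (fun x => x ^ 3 - numerator x) (Ici 0) := by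
    refine monotoneOn_Ici_of_hasDerivAt_nonneg
      (fun x => (hasDerivAt_pow 3 x).sub (hasDerivAt_numerator x)) fun x _ => ?_
    -- `q ≥ 1/2` bounds the derivative of the numerator by `2√2 x² ≤ 3 x²`
    have hle : √2 * x ^ 2 / (1 - √2 * x + x ^ 2) ≤ 3 * x ^ 2 := by
      rw [div_le_iff₀ (quadratic_pos x)]
      nlinarith [mul_le_mul_of_nonneg_right sqrt_two_lt_three_halves.le (sq_nonneg x),
        mul_le_mul_of_nonneg_left (half_le_quadratic x) (by positivity : (0 : ℝ) ≤ 3 * x ^ 2)]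
    simp only [Nat.cast_ofNat]
    linarith
  simpa [numerator_zero] using hmono self_mem_Ici hs hs

lemma numerator_le_linear {s : ℝ} (hs : 0 ≤ s) : numerator s ≤ 4 * s := by
  have hq : 1 - √2 * s + s ^ 2 ≤ (1 + s) ^ 2 := by nlinarith [sqrt_nonneg 2]
  have hlog : log (1 - √2 * s + s ^ 2) ≤ 2 * s := calc
    log (1 - √2 * s + s ^ 2) ≤ log ((1 + s) ^ 2) := log_le_log (quadratic_pos s) hq
    _ = 2 * log (1 + s) := by rw [log_pow]; norm_num
    _ ≤ 2 * s := by linarith [log_le_sub_one_of_pos (by linarith : 0 < 1 + s)]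
  unfold numerator
  nlinarith [sqrt_two_lt_three_halves.le]

lemma tendsto_numerator_div_sq_nhdsGE_zero :
    Tendsto (fun s => numerator s / (2 * s ^ 2)) (𝓝[Ici 0] 0) (𝓝 0) := by
  refine tendsto_of_tendsto_of_tendsto_of_le_of_le' tendsto_const_nhds
    (h := fun s => s / 2) ?_ ?_ ?_
  · simpa using ((continuous_id.div_const (2 : ℝ)).tendsto 0).mono_left nhdsWithin_le_nhds
  all_goals filter_upwards [self_mem_nhdsWithin] with s (hs : 0 ≤ s)
  · exact div_nonneg (numerator_nonneg hs) (by positivity)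
  · rcases hs.eq_or_lt with rfl | hs
    · simp
    · rw [div_le_div_iff₀ (by positivity) two_pos]
      nlinarith [numerator_le_cube hs.le]

lemma tendsto_numerator_div_sq_atTop :
    Tendsto (fun s => numerator s / (2 * s ^ 2)) atTop (𝓝 0) := by
  refine tendsto_of_tendsto_of_tendsto_of_le_of_le' tendsto_const_nhds
    (h := fun s => 2 / s) (tendsto_const_nhds.div_atTop tendsto_id) ?_ ?_
  all_goals filter_upwards [eventually_gt_atTop 0] with s hs
  · exact div_nonneg (numerator_nonneg hs.le) (by positivity)
  · rw [div_le_div_iff₀ (by positivity) hs]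
    nlinarith [numerator_le_linear hs.le]

noncomputable def antideriv (s : ℝ) : ℝ := arctan (√2 * s - 1) - numerator s / (2 * s ^ 2)

lemma antideriv_zero : antideriv 0 = -(π / 4) := by
  simp [antideriv, arctan_neg, arctan_one]

lemma hasDerivAt_antideriv {s : ℝ} (hs : 0 < s) :
    HasDerivAt antideriv (numerator s / s ^ 3) s := by
  have hlin : HasDerivAt (fun s => √2 * s - 1) √2 s := by
    simpa using ((hasDerivAt_id s).const_mul √2).sub_const 1
  have hden : HasDerivAt (fun s => 2 * s ^ 2) (4 * s) s :=
    ((hasDerivAt_pow 2 s).const_mul 2).congr_deriv (by ring)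
  refine (((hasDerivAt_arctan _).comp s hlin).sub
    ((hasDerivAt_numerator s).div hden (by positivity))).congr_deriv ?_
  have h2q : 1 + (√2 * s - 1) ^ 2 = 2 * (1 - √2 * s + s ^ 2) := by
    linear_combination s ^ 2 * sqrt_two_sq
  rw [h2q]
  field_simp [(quadratic_pos s).ne']
  ring

lemma continuousWithinAt_antideriv_zero : ContinuousWithinAt antideriv (Ici 0) 0 := by
  have harctan : ContinuousWithinAt (fun s => arctan (√2 * s - 1)) (Ici 0) 0 := by
    fun_prop
  rw [ContinuousWithinAt, show antideriv 0 = arctan (√2 * 0 - 1) - 0 by simp [antideriv]]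
  exact harctan.tendsto.sub tendsto_numerator_div_sq_nhdsGE_zero

lemma tendsto_antideriv_atTop : Tendsto antideriv atTop (𝓝 (π / 2)) := by
  have hlin : Tendsto (fun s => √2 * s - 1) atTop atTop :=
    tendsto_atTop_add_const_right _ _ (tendsto_id.const_mul_atTop (sqrt_pos.2 two_pos))
  have := (tendsto_arctan_atTop.mono_right nhdsWithin_le_nhds).comp hlin
    |>.sub tendsto_numerator_div_sq_atTop
  rwa [sub_zero] at this

end SqrtTwoLogIntegral

open SqrtTwoLogIntegral

/-- The improper integral ∫₀^∞ (log(1 - √2 s + s²) + √2 s)/s³ ds converges and equals 3π/4. -/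
theorem stmt2 :
    MeasureTheory.IntegrableOn
      (fun s : ℝ => (Real.log (1 - Real.sqrt 2 * s + s ^ 2) + Real.sqrt 2 * s) / s ^ 3)
      (Set.Ioi 0) ∧
    (∫ s in Set.Ioi (0 : ℝ),
        (Real.log (1 - Real.sqrt 2 * s + s ^ 2) + Real.sqrt 2 * s) / s ^ 3)
      = 3 * Real.pi / 4 := by
  change IntegrableOn (fun s => numerator s / s ^ 3) (Ioi 0) ∧
    ∫ s in Ioi 0, numerator s / s ^ 3 = 3 * π / 4
  have hderiv : ∀ s ∈ Ioi (0 : ℝ), HasDerivAt antideriv (numerator s / s ^ 3) s :=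
    fun s hs => hasDerivAt_antideriv hs
  have hnonneg : ∀ s ∈ Ioi (0 : ℝ), 0 ≤ numerator s / s ^ 3 :=
    fun s (hs : 0 < s) => div_nonneg (numerator_nonneg hs.le) (by positivity)
  refine ⟨integrableOn_Ioi_deriv_of_nonneg continuousWithinAt_antideriv_zero hderiv hnonneg
    tendsto_antideriv_atTop, ?_⟩
  rw [integral_Ioi_of_hasDerivAt_of_nonneg continuousWithinAt_antideriv_zero hderiv hnonneg
    tendsto_antideriv_atTop, antideriv_zero]
  ring
end

section
/- Let β > 0, δ > 1, and let {R_k} be a sequence with R_{k+1} > δ·R_k. Define H on [0,∞) by H(t) = 2∫₀^t s dν(s) − β·t², where dν(r) = β dr + Σ_k ((1/2)(a²−β)R_k·δ_{R_k} − β·χ_{[R_k, δR_k]}(r) dr) with a² = β·δ². Then H(t) ≥ 0 for all t ≥ 0. -/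
open MeasureTheory Set Filter Function
open scoped ENNReal

/-!
Below t, ν is β·Lebesgue on (0, t] with the gaps [R_k, δR_k) removed, plus the atoms at the
finitely many R_k ≤ t. Hence H(t) = Σ_{R_k ≤ t} ((a² - β) R_k² - 2β ∫_{(0,t] ∩ [R_k, δR_k)} s ds),
and each term is nonnegative: the truncated gap integral is at most the full one,
(δ² - 1) R_k² / 2, while a² - β = (δ² - 1) β.
-/

theorem exists_lt_iff_le_of_monotone {α : Type*} [LinearOrder α] {f : ℕ → α} (hf : Monotone f)
    {t : α} (h : ∃ k, t < f k) : ∃ N, ∀ k, k < N ↔ f k ≤ t := by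
  classical
  refine ⟨Nat.find h, fun k => ⟨fun hk => not_lt.1 (Nat.find_min h hk), fun hk => ?_⟩⟩
  by_contra hN
  exact (Nat.find_spec h).not_ge ((hf (not_lt.1 hN)).trans hk)

section Lacunary

variable {δ : ℝ} {R : ℕ → ℝ}

theorem pos_of_lacunary (hδ : 0 ≤ δ) (hR0 : 0 < R 0) (hR : ∀ k, δ * R k < R (k + 1)) (k : ℕ) :
    0 < R k := by
  induction k with
  | zero => exact hR0
  | succ k ih => exact (mul_nonneg hδ ih.le).trans_lt (hR k)

theorem monotone_of_lacunary (hδ : 1 ≤ δ) (hR0 : 0 < R 0) (hR : ∀ k, δ * R k < R (k + 1)) :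
    Monotone R :=
  monotone_nat_of_le_succ fun k =>
    (le_mul_of_one_le_left (pos_of_lacunary (zero_le_one.trans hδ) hR0 hR k).le hδ).trans (hR k).le

theorem pairwise_disjoint_Ico_of_lacunary (hδ : 1 ≤ δ) (hR0 : 0 < R 0)
    (hR : ∀ k, δ * R k < R (k + 1)) : Pairwise (Disjoint on fun k => Ico (R k) (δ * R k)) :=
  (pairwise_disjoint_on _).2 fun i _ hij =>
    Ico_disjoint_Ico_same.mono_right
      (Ico_subset_Ico_left ((hR i).le.trans (monotone_of_lacunary hδ hR0 hR hij)))

end Lacunary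

theorem MeasureTheory.Measure.restrict_sum_smul_dirac {α ι : Type*} [MeasurableSpace α]
    [MeasurableSingletonClass α] [Countable ι] (c : ι → ℝ≥0∞) (x : ι → α) {s : Set α}
    (hs : MeasurableSet s) {I : Finset ι} (hI : ∀ k, k ∈ I ↔ x k ∈ s) :
    (Measure.sum fun k => c k • Measure.dirac (x k)).restrict s
      = ∑ k ∈ I, c k • Measure.dirac (x k) := by
  classical
  have hrestrict : ∀ k, (c k • Measure.dirac (x k)).restrict s
      = if k ∈ I then c k • Measure.dirac (x k) else 0 := by
    intro k
    rw [Measure.restrict_smul, restrict_dirac]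
    by_cases hk : k ∈ I
    · rw [if_pos ((hI k).1 hk), if_pos hk]
    · rw [if_neg (mt (hI k).2 hk), if_neg hk, smul_zero]
  ext u hu
  rw [Measure.restrict_sum _ hs, Measure.sum_apply _ hu, Measure.finsetSum_apply,
    tsum_eq_sum (s := I) fun k hk => by rw [hrestrict, if_neg hk]; rfl]
  exact Finset.sum_congr rfl fun k hk => by rw [hrestrict, if_pos hk]

theorem setIntegral_Ico_id {a b : ℝ} (hab : a ≤ b) : ∫ s in Ico a b, s = (b ^ 2 - a ^ 2) / 2 := by
  rw [integral_Ico_eq_integral_Ioo, ← integral_Ioc_eq_integral_Ioo,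
    ← intervalIntegral.integral_of_le hab, integral_id]

theorem setIntegral_Ioc_inter_iUnion_Ico_le {δ t : ℝ} {R : ℕ → ℝ} {N : ℕ} (hδ : 1 ≤ δ)
    (hR : ∀ k, 0 ≤ R k) (hdisj : Pairwise (Disjoint on fun k => Ico (R k) (δ * R k)))
    (hN : ∀ k, k < N ↔ R k ≤ t) :
    ∫ s in Ioc 0 t ∩ ⋃ k, Ico (R k) (δ * R k), s
      ≤ ∑ k ∈ Finset.range N, ((δ * R k) ^ 2 - R k ^ 2) / 2 := by
  have hsub : Ioc 0 t ∩ ⋃ k, Ico (R k) (δ * R k) ⊆ ⋃ k ∈ Finset.range N, Ico (R k) (δ * R k) := by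
    rintro x ⟨⟨-, hxt⟩, hx⟩
    obtain ⟨k, hxk⟩ := mem_iUnion.1 hx
    exact mem_biUnion (Finset.mem_range.2 ((hN k).2 (hxk.1.trans hxt))) hxk
  have hnonneg :
      0 ≤ᵐ[volume.restrict (⋃ k ∈ Finset.range N, Ico (R k) (δ * R k))] fun s : ℝ => s := by
    refine (ae_restrict_iff' (Finset.measurableSet_biUnion _ fun k _ => measurableSet_Ico)).2
      (Eventually.of_forall fun x hx => ?_)
    obtain ⟨k, -, hxk⟩ := mem_iUnion₂.1 hx
    exact (hR k).trans hxk.1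
  have hint : ∀ k, IntegrableOn (fun s : ℝ => s) (Ico (R k) (δ * R k)) :=
    fun k => continuous_id.integrableOn_Icc.mono_set Ico_subset_Icc_self
  calc ∫ s in Ioc 0 t ∩ ⋃ k, Ico (R k) (δ * R k), s
      ≤ ∫ s in ⋃ k ∈ Finset.range N, Ico (R k) (δ * R k), s :=
        setIntegral_mono_set (integrableOn_finset_iUnion.2 fun k _ => hint k) hnonneg
          hsub.eventuallyLE
    _ = ∑ k ∈ Finset.range N, ∫ s in Ico (R k) (δ * R k), s :=
        integral_biUnion_finset _ (fun k _ => measurableSet_Ico) (hdisj.set_pairwise _)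
          fun k _ => hint k
    _ = ∑ k ∈ Finset.range N, ((δ * R k) ^ 2 - R k ^ 2) / 2 :=
        Finset.sum_congr rfl fun k _ => setIntegral_Ico_id (le_mul_of_one_le_left (hR k) hδ)

theorem setIntegral_Ioc_sdiff_iUnion_Ico {δ t : ℝ} {R : ℕ → ℝ} (ht : 0 ≤ t) :
    ∫ s in Ioc 0 t \ ⋃ k, Ico (R k) (δ * R k), s
      = t ^ 2 / 2 - ∫ s in Ioc 0 t ∩ ⋃ k, Ico (R k) (δ * R k), s := by
  have hint : IntegrableOn (fun s : ℝ => s) (Ioc 0 t) :=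
    continuous_id.integrableOn_Icc.mono_set Ioc_subset_Icc_self
  have hIoc : ∫ s in Ioc 0 t, s = t ^ 2 / 2 := by
    rw [← intervalIntegral.integral_of_le ht, integral_id]; ring
  rw [← hIoc, ← integral_inter_add_sdiff
    (MeasurableSet.iUnion fun (_ : ℕ) => measurableSet_Ico) hint]
  ring

noncomputable def lacunaryMeasure (β δ a : ℝ) (R : ℕ → ℝ) : Measure ℝ :=
  (volume.restrict {r : ℝ | 0 < r ∧ ∀ k, r ∉ Set.Ico (R k) (δ * R k)}).withDensity
      (fun _ => ENNReal.ofReal β)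
    + Measure.sum (fun k : ℕ =>
        (ENNReal.ofReal ((1 / 2) * (a ^ 2 - β) * R k)) • Measure.dirac (R k))

theorem setIntegral_Iic_lacunaryMeasure {β δ a t : ℝ} {R : ℕ → ℝ} {N : ℕ} (hβ : 0 ≤ β)
    (ha : β ≤ a ^ 2) (hR : ∀ k, 0 ≤ R k) (hN : ∀ k, k < N ↔ R k ≤ t) (ht : 0 ≤ t) :
    ∫ s in Iic t, s ∂lacunaryMeasure β δ a R
      = β * (t ^ 2 / 2 - ∫ s in Ioc 0 t ∩ ⋃ k, Ico (R k) (δ * R k), s)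
        + ∑ k ∈ Finset.range N, (a ^ 2 - β) / 2 * R k ^ 2 := by
  have hgood : Iic t ∩ {r : ℝ | 0 < r ∧ ∀ k, r ∉ Ico (R k) (δ * R k)}
      = Ioc 0 t \ ⋃ k, Ico (R k) (δ * R k) := by
    ext r
    simp only [mem_inter_iff, mem_Iic, mem_ofPred_eq, Set.mem_sdiff, mem_Ioc, mem_iUnion,
      not_exists]
    tauto
  have hatoms : ∀ k, k ∈ Finset.range N ↔ R k ∈ Iic t := fun k => Finset.mem_range.trans (hN k)
  have hmass : ∀ k, 0 ≤ 1 / 2 * (a ^ 2 - β) * R k :=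
    fun k => mul_nonneg (by linarith) (hR k)
  have hint_atom : ∀ k, Integrable (fun s : ℝ => s)
      (ENNReal.ofReal (1 / 2 * (a ^ 2 - β) * R k) • Measure.dirac (R k)) :=
    fun k => (integrable_dirac enorm_lt_top).smul_measure ENNReal.ofReal_ne_top
  have hint_good : IntegrableOn (fun s : ℝ => s) (Ioc 0 t \ ⋃ k, Ico (R k) (δ * R k)) :=
    continuous_id.integrableOn_Icc.mono_set (sdiff_subset.trans Ioc_subset_Icc_self)
  rw [lacunaryMeasure, Measure.restrict_add, withDensity_const, Measure.restrict_smul,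
    Measure.restrict_restrict measurableSet_Iic,
    Measure.restrict_sum_smul_dirac _ _ measurableSet_Iic hatoms, hgood,
    integral_add_measure (hint_good.smul_measure ENNReal.ofReal_ne_top)
      (integrable_finsetSum_measure.2 fun k _ => hint_atom k),
    integral_smul_measure, setIntegral_Ioc_sdiff_iUnion_Ico ht,
    integral_finsetSum_measure fun k _ => hint_atom k, ENNReal.toReal_ofReal hβ, smul_eq_mul]
  congr 1
  refine Finset.sum_congr rfl fun k _ => ?_
  rw [integral_smul_measure, integral_dirac, ENNReal.toReal_ofReal (hmass k), smul_eq_mul]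
  ring

/-- With dν(r) = β dr + Σ_k ((1/2)(a²-β)R_k·δ_{R_k} - β·χ_{[R_k,δR_k]}(r) dr) on (0,∞),
a = δ√β, and H(t) = 2∫₀^t s dν(s) - βt², one has H(t) ≥ 0 for all t ≥ 0. -/
theorem stmt10 (β δ : ℝ) (hβ : 0 < β) (hδ : 1 < δ)
    (R : ℕ → ℝ) (hR0 : 0 < R 0) (hR : ∀ k, δ * R k < R (k + 1))
    (a : ℝ) (ha : a = δ * Real.sqrt β)
    (ν : Measure ℝ)
    (hν : ν = (volume.restrict {r : ℝ | 0 < r ∧ ∀ k, r ∉ Set.Ico (R k) (δ * R k)}).withDensity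
        (fun _ => ENNReal.ofReal β)
      + Measure.sum (fun k : ℕ =>
          (ENNReal.ofReal ((1 / 2) * (a ^ 2 - β) * R k)) • Measure.dirac (R k)))
    (H : ℝ → ℝ)
    (hH : ∀ t : ℝ, H t = 2 * (∫ s in Set.Iic t, s ∂ν) - β * t ^ 2) :
    ∀ t : ℝ, 0 ≤ t → 0 ≤ H t := by
  intro t ht
  have hRnonneg k : 0 ≤ R k := (pos_of_lacunary (zero_le_one.trans hδ.le) hR0 hR k).le
  obtain ⟨N, hN⟩ := exists_lt_iff_le_of_monotone (monotone_of_lacunary hδ.le hR0 hR)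
    ((tendsto_atTop_of_geom_le hR0 hδ fun k => (hR k).le).eventually_gt_atTop t).exists
  have ha2 : a ^ 2 = δ ^ 2 * β := by rw [ha, mul_pow, Real.sq_sqrt hβ.le]
  have hatoms : ∑ k ∈ Finset.range N, (a ^ 2 - β) / 2 * R k ^ 2
      = β * ∑ k ∈ Finset.range N, ((δ * R k) ^ 2 - R k ^ 2) / 2 := by
    rw [Finset.mul_sum]
    exact Finset.sum_congr rfl fun k _ => by rw [ha2]; ring
  have hgaps := setIntegral_Ioc_inter_iUnion_Ico_le hδ.le hRnonneg
    (pairwise_disjoint_Ico_of_lacunary hδ.le hR0 hR) hN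
  rw [hH, show ν = lacunaryMeasure β δ a R from hν,
    setIntegral_Iic_lacunaryMeasure hβ.le
      (ha2 ▸ le_mul_of_one_le_left hβ.le (one_le_pow₀ hδ.le)) hRnonneg hN ht, hatoms]
  linarith [mul_le_mul_of_nonneg_left hgaps hβ.le]
end

section
/- Let F be an entire function with simple zeros such that for some integers m, n: z^m·F ∈ F₀ and for every nonzero entire G, z^n·F·G ∉ F₀. Then by adding to or removing from the zero set of F a finite set of points, one obtains a set Λ such that {k_λ}_{λ∈Λ} is a complete and minimal system in the Fock space F. -/
/-- Membership in the Fock space. -/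
def MemFock (F : ℂ → ℂ) : Prop :=
  Differentiable ℂ F ∧
    MeasureTheory.Integrable
      (fun z : ℂ => ‖F z‖ ^ 2 * Real.exp (-Real.pi * ‖z‖ ^ 2))

/-- Membership in F₀: analytic on {|z| > 1} and square integrable there against the
Gaussian weight. -/
def MemF0 (F : ℂ → ℂ) : Prop :=
  AnalyticOn ℂ F {z : ℂ | 1 < ‖z‖} ∧
    MeasureTheory.IntegrableOn
      (fun z : ℂ => ‖F z‖ ^ 2 * Real.exp (-Real.pi * ‖z‖ ^ 2))
      {z : ℂ | 1 < ‖z‖}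

/-!
Let `N` be the largest integer `k` such that `z ^ k * F * G ∈ F₀` for some nonzero entire `G`; it
exists because `m` is such an exponent and no `k ≥ n` is. Since `F` has simple zeros, every entire
function vanishing on its zero set `Z` is `F` times an entire function. Form `Λ` from `Z` by
removing a set `T` of zeros and adding a set `S` of non-zeros with `#S - #T = N + 1`.

If `G` in the Fock space vanishes on `Λ`, then `G * ∏_{q ∈ T} (z - q) = F * H * ∏_{p ∈ S} (z - p)`
with `H` entire, so `z ^ (N + 1) * F * H = O(G)` at infinity; maximality of `N` forces `H = 0`,
hence `G = 0`. For `l ∈ Λ`, put `l` into `T` (or take it out of `S`): then `#S - #T = N`, and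
`F * G₀ * ∏_S (z - p) / ∏_T (z - q)` is `O(z ^ N * F * G₀)`, so it lies in the Fock space and
vanishes on `Λ \ {l}`. Removing zeros requires `Z` to be infinite: otherwise `F` divides the
polynomial `∏_{q ∈ Z} (z - q)`, and then every `k ≥ 0` would be an exponent as above.
-/

open MeasureTheory Filter Topology Asymptotics Set
open scoped Finset

theorem Differentiable.fun_mul_ne_zero {f g : ℂ → ℂ} (hf : Differentiable ℂ f)
    (hg : Differentiable ℂ g) (hf0 : f ≠ 0) (hg0 : g ≠ 0) : (fun z => f z * g z) ≠ 0 := by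
  intro hfg
  rcases AnalyticOnNhd.eq_zero_or_eq_zero_of_mul_eq_zero (fun z _ => hf.analyticAt z)
    (fun z _ => hg.analyticAt z) (fun z _ => congr_fun hfg z) isPreconnected_univ with h | h
  · exact hf0 (funext fun z => h z trivial)
  · exact hg0 (funext fun z => h z trivial)

theorem prod_sub_ne_zero (T : Finset ℂ) : (fun z : ℂ => ∏ q ∈ T, (z - q)) ≠ 0 := by
  obtain ⟨z, hz⟩ := Infinite.exists_notMem_finset T
  refine fun h => Finset.prod_ne_zero_iff.2 (fun q hq => sub_ne_zero.2 ?_) (congr_fun h z)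
  rintro rfl
  exact hz hq

theorem Differentiable.dslope {f : ℂ → ℂ} (hf : Differentiable ℂ f) (a : ℂ) :
    Differentiable ℂ (dslope f a) := by
  rw [← differentiableOn_univ, Complex.differentiableOn_dslope univ_mem]
  exact hf.differentiableOn

theorem exists_eq_prod_sub_mul {G : ℂ → ℂ} (hG : Differentiable ℂ G) (T : Finset ℂ)
    (hT : ∀ q ∈ T, G q = 0) :
    ∃ H : ℂ → ℂ, Differentiable ℂ H ∧ ∀ z, G z = (∏ q ∈ T, (z - q)) * H z := by
  induction T using Finset.induction_on generalizing G with
  | empty => exact ⟨G, hG, fun z => by simp⟩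
  | insert q T hq ih =>
    have hGq : ∀ z, G z = (z - q) * dslope G q z := fun z => by
      simpa [hT q (Finset.mem_insert_self q T)] using (sub_smul_dslope G q z).symm
    obtain ⟨H, hH, hGH⟩ := ih (hG.dslope q) fun q' hq' => by
      have := hGq q' ▸ hT q' (Finset.mem_insert_of_mem hq')
      exact (mul_eq_zero.1 this).resolve_left (sub_ne_zero.2 (ne_of_mem_of_not_mem hq' hq))
    exact ⟨H, hH, fun z => by rw [hGq, hGH, Finset.prod_insert hq, mul_assoc]⟩

theorem exists_eq_mul_of_simple_zeros {F G : ℂ → ℂ} (hF : Differentiable ℂ F)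
    (hG : Differentiable ℂ G) (hsimple : ∀ z, F z = 0 → deriv F z ≠ 0)
    (hGF : ∀ z, F z = 0 → G z = 0) :
    ∃ H : ℂ → ℂ, Differentiable ℂ H ∧ ∀ z, G z = F z * H z := by
  set H : ℂ → ℂ := fun z => if F z = 0 then deriv G z / deriv F z else G z / F z
  refine ⟨H, fun z₀ => ?_, fun z => ?_⟩
  · by_cases h0 : F z₀ = 0
    · -- near a zero `z₀`, `H` is the quotient of the difference slopes of `G` and `F` at `z₀`
      have hne : dslope F z₀ z₀ ≠ 0 := by rw [dslope_same]; exact hsimple z₀ h0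
      have hev : H =ᶠ[𝓝 z₀] fun z => dslope G z₀ z / dslope F z₀ z := by
        filter_upwards [((hF.dslope z₀) z₀).continuousAt.eventually_ne hne] with z hz
        rcases eq_or_ne z z₀ with rfl | hzz
        · simp [H, h0, dslope_same]
        · have hFz := sub_smul_dslope F z₀ z
          have hGz := sub_smul_dslope G z₀ z
          rw [h0, sub_zero, smul_eq_mul] at hFz
          rw [hGF z₀ h0, sub_zero, smul_eq_mul] at hGz
          have hFz0 : F z ≠ 0 := hFz ▸ mul_ne_zero (sub_ne_zero.2 hzz) hz
          simp only [H, if_neg hFz0, ← hFz, ← hGz, mul_div_mul_left _ _ (sub_ne_zero.2 hzz)]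
      exact hev.differentiableAt_iff.2 (((hG.dslope z₀) z₀).div ((hF.dslope z₀) z₀) hne)
    · have hev : H =ᶠ[𝓝 z₀] fun z => G z / F z := by
        filter_upwards [(hF z₀).continuousAt.eventually_ne h0] with z hz
        simp [H, hz]
      exact hev.differentiableAt_iff.2 ((hG z₀).div (hF z₀) h0)
  · by_cases h : F z = 0
    · simp [H, h, hGF z h]
    · simp [H, h, mul_div_cancel₀]

theorem integrable_exp_neg_mul_sq_norm {V : Type*} [NormedAddCommGroup V] [InnerProductSpace ℝ V]
    [FiniteDimensional ℝ V] [MeasurableSpace V] [BorelSpace V] {b : ℝ} (hb : 0 < b) :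
    Integrable (fun v : V => Real.exp (-b * ‖v‖ ^ 2)) := by
  have h := (GaussianFourier.integrable_cexp_neg_mul_sq_norm_add (V := V)
    (b := b) (by simpa using hb) 0 0).norm
  simp only [zero_mul, add_zero, Complex.norm_exp] at h
  convert h using 2 with v
  norm_cast

noncomputable def fockIntegrand (f : ℂ → ℂ) (z : ℂ) : ℝ :=
  ‖f z‖ ^ 2 * Real.exp (-Real.pi * ‖z‖ ^ 2)

theorem fockIntegrand_nonneg (f : ℂ → ℂ) (z : ℂ) : 0 ≤ fockIntegrand f z := by
  unfold fockIntegrand; positivity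

theorem ContinuousOn.fockIntegrand {f : ℂ → ℂ} {s : Set ℂ} (hf : ContinuousOn f s) :
    ContinuousOn (fockIntegrand f) s :=
  (hf.norm.pow 2).mul (by fun_prop)

theorem Continuous.fockIntegrand {f : ℂ → ℂ} (hf : Continuous f) :
    Continuous (fockIntegrand f) :=
  (hf.norm.pow 2).mul (by fun_prop)

theorem integrable_fockIntegrand_pow (k : ℕ) : Integrable (fockIntegrand (· ^ k)) := by
  refine ((integrable_exp_neg_mul_sq_norm (V := ℂ) (b := Real.pi - 1)
    (by linarith [Real.pi_gt_three])).const_mul k.factorial).mono'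
    (continuous_id.pow k).fockIntegrand.aestronglyMeasurable (ae_of_all _ fun z => ?_)
  have hpow : (‖z‖ ^ 2) ^ k ≤ k.factorial * Real.exp (‖z‖ ^ 2) := by
    have := Real.pow_div_factorial_le_exp _ (sq_nonneg ‖z‖) k
    rwa [div_le_iff₀ (by positivity), mul_comm] at this
  rw [Real.norm_of_nonneg (fockIntegrand_nonneg _ z), fockIntegrand, norm_pow, ← pow_mul,
    mul_comm k 2, pow_mul]
  calc (‖z‖ ^ 2) ^ k * Real.exp (-Real.pi * ‖z‖ ^ 2)
      ≤ k.factorial * Real.exp (‖z‖ ^ 2) * Real.exp (-Real.pi * ‖z‖ ^ 2) := by gcongr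
    _ = k.factorial * Real.exp (-(Real.pi - 1) * ‖z‖ ^ 2) := by
      rw [mul_assoc, ← Real.exp_add]; ring_nf

theorem fockIntegrand_le_of_norm_le {f g : ℂ → ℂ} {C : ℝ} {z : ℂ} (h : ‖f z‖ ≤ C * ‖g z‖) :
    fockIntegrand f z ≤ C ^ 2 * fockIntegrand g z := by
  unfold fockIntegrand
  rw [← mul_assoc, ← mul_pow]
  gcongr

theorem integrableOn_fockIntegrand_of_isBigO {f g : ℂ → ℂ} {s t : Set ℂ} (hs : MeasurableSet s)
    (ht : IsClosed t) (hst : s ⊆ t) (hf : ContinuousOn f t)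
    (hg : IntegrableOn (fockIntegrand g) s) (hfg : f =O[cocompact ℂ] g) :
    IntegrableOn (fockIntegrand f) s := by
  obtain ⟨C, hC⟩ := hfg.bound
  obtain ⟨K, hK, hKC⟩ := hasBasis_cocompact.eventually_iff.1 hC
  have hcompact : IntegrableOn (fockIntegrand f) (s ∩ K) :=
    ((hf.mono inter_subset_left).fockIntegrand.integrableOn_compact (hK.inter_left ht)).mono_set
      (inter_subset_inter_left K hst)
  have htail : IntegrableOn (fockIntegrand f) (s \ K) := by
    refine ((hg.mono_set sdiff_subset).const_mul (C ^ 2)).mono'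
      ((hf.mono (sdiff_subset.trans hst)).fockIntegrand.aestronglyMeasurable
        (hs.diff hK.isClosed.measurableSet)) ?_
    refine (ae_restrict_iff' (hs.diff hK.isClosed.measurableSet)).2 (ae_of_all _ fun z hz => ?_)
    rw [Real.norm_of_nonneg (fockIntegrand_nonneg f z)]
    exact fockIntegrand_le_of_norm_le (hKC hz.2)
  simpa only [inter_union_sdiff] using hcompact.union htail

theorem memFock_of_isBigO {f g : ℂ → ℂ} (hf : Differentiable ℂ f)
    (hg : IntegrableOn (fockIntegrand g) {z | 1 < ‖z‖}) (hfg : f =O[cocompact ℂ] g) :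
    MemFock f := by
  refine ⟨hf, ?_⟩
  have hball : IntegrableOn (fockIntegrand f) (Metric.closedBall 0 1) :=
    hf.continuous.fockIntegrand.continuousOn.integrableOn_compact (isCompact_closedBall 0 1)
  have hout : IntegrableOn (fockIntegrand f) {z | 1 < ‖z‖} :=
    integrableOn_fockIntegrand_of_isBigO (isOpen_lt continuous_const continuous_norm).measurableSet
      isClosed_univ (subset_univ _) hf.continuous.continuousOn hg hfg
  rw [← integrableOn_univ]
  refine (hball.union hout).mono_set fun z _ => ?_
  simpa using le_or_gt ‖z‖ 1

theorem norm_prod_sub_le {T : Finset ℂ} {z : ℂ} (hT : ∀ q ∈ T, ‖q‖ ≤ ‖z‖) :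
    ‖∏ q ∈ T, (z - q)‖ ≤ (2 * ‖z‖) ^ #T := by
  rw [norm_prod, ← Finset.prod_const]
  refine Finset.prod_le_prod (fun _ _ => norm_nonneg _) fun q hq => ?_
  linarith [norm_sub_le z q, hT q hq]

theorem le_norm_prod_sub {S : Finset ℂ} {z : ℂ} (hS : ∀ p ∈ S, 2 * ‖p‖ ≤ ‖z‖) :
    (‖z‖ / 2) ^ #S ≤ ‖∏ p ∈ S, (z - p)‖ := by
  rw [norm_prod, ← Finset.prod_const]
  refine Finset.prod_le_prod (fun _ _ => by positivity) fun p hp => ?_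
  linarith [norm_sub_norm_le z p, hS p hp]

theorem isBigO_zpow_mul_of_mul_prod_eq {S T : Finset ℂ} {j k : ℤ} (hjk : #S + j = #T + k)
    {a b : ℂ → ℂ} (hab : ∀ z, a z * ∏ p ∈ S, (z - p) = b z * ∏ q ∈ T, (z - q)) :
    (fun z => z ^ k * a z) =O[cocompact ℂ] fun z => z ^ j * b z := by
  refine IsBigO.of_bound (2 ^ (#S + #T)) ?_
  have hfar : ∀ᶠ z : ℂ in cocompact ℂ, ∀ p ∈ S ∪ T, 2 * ‖p‖ ≤ ‖z‖ :=
    (Finset.eventually_all _).2 fun p _ =>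
      tendsto_norm_cocompact_atTop.eventually_ge_atTop _
  filter_upwards [hfar, tendsto_norm_cocompact_atTop.eventually_gt_atTop 0] with z hz hz0
  have hS : ∀ p ∈ S, 2 * ‖p‖ ≤ ‖z‖ := fun p hp => hz p (Finset.mem_union_left T hp)
  have hT : ∀ q ∈ T, ‖q‖ ≤ ‖z‖ := fun q hq => by
    linarith [hz q (Finset.mem_union_right S hq), norm_nonneg q]
  have key : ‖a z‖ * (‖z‖ / 2) ^ #S ≤ ‖b z‖ * (2 * ‖z‖) ^ #T := by
    calc ‖a z‖ * (‖z‖ / 2) ^ #S ≤ ‖a z * ∏ p ∈ S, (z - p)‖ := by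
          rw [norm_mul]; gcongr; exact le_norm_prod_sub hS
      _ = ‖b z * ∏ q ∈ T, (z - q)‖ := by rw [hab]
      _ ≤ ‖b z‖ * (2 * ‖z‖) ^ #T := by rw [norm_mul]; gcongr; exact norm_prod_sub_le hT
  set x := ‖z‖
  have hpow : x ^ k * x ^ #T = x ^ j * x ^ #S := by
    simp only [← zpow_natCast, ← zpow_add₀ hz0.ne']
    rw [add_comm k, ← hjk, add_comm]
  have hhalf : (x / 2) ^ #S * 2 ^ #S = x ^ #S := by rw [← mul_pow, div_mul_cancel₀ x two_ne_zero]
  rw [norm_mul, norm_mul, norm_zpow, norm_zpow]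
  refine le_of_mul_le_mul_right ?_ (pow_pos hz0 #T)
  calc x ^ k * ‖a z‖ * x ^ #T = 2 ^ #S * x ^ j * (‖a z‖ * (x / 2) ^ #S) := by
        linear_combination ‖a z‖ * hpow - x ^ j * ‖a z‖ * hhalf
    _ ≤ 2 ^ #S * x ^ j * (‖b z‖ * (2 * x) ^ #T) := by gcongr
    _ = 2 ^ (#S + #T) * (x ^ j * ‖b z‖) * x ^ #T := by ring

def IsF0Exponent (F : ℂ → ℂ) (k : ℤ) : Prop :=
  ∃ G : ℂ → ℂ, Differentiable ℂ G ∧ G ≠ 0 ∧ MemF0 (fun z : ℂ => z ^ k * F z * G z)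

theorem IsF0Exponent.of_le {F : ℂ → ℂ} {j k : ℤ} (hk : IsF0Exponent F k) (hjk : j ≤ k) :
    IsF0Exponent F j := by
  obtain ⟨G, hG, hG0, hmem⟩ := hk
  obtain ⟨d, hd⟩ := Int.eq_ofNat_of_zero_le (sub_nonneg.2 hjk)
  have hpow0 : (fun z : ℂ => z ^ d) ≠ 0 := Function.ne_iff.2 ⟨1, by simp⟩
  have heq : EqOn (fun z : ℂ => z ^ k * F z * G z) (fun z => z ^ j * F z * (z ^ d * G z))
      {z | 1 < ‖z‖} := fun z hz => by
    have hz0 : z ≠ 0 := norm_pos_iff.1 (one_pos.trans hz)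
    simp only [show k = j + d by omega, zpow_add₀ hz0, zpow_natCast]
    ring
  exact ⟨fun z => z ^ d * G z, by fun_prop, (differentiable_pow d).fun_mul_ne_zero hG hpow0 hG0,
    hmem.1.congr heq.symm, hmem.2.congr_fun (fun z hz => by simp only [heq hz])
      (isOpen_lt continuous_const continuous_norm).measurableSet⟩

theorem isF0Exponent_of_isBigO {F G g : ℂ → ℂ} {k : ℤ} (hF : Differentiable ℂ F)
    (hG : Differentiable ℂ G) (hG0 : G ≠ 0) (hg : IntegrableOn (fockIntegrand g) {z | 1 < ‖z‖})
    (hO : (fun z => z ^ k * (F z * G z)) =O[cocompact ℂ] g) : IsF0Exponent F k := by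
  have hdiff : DifferentiableOn ℂ (fun z => z ^ k * (F z * G z)) {0}ᶜ := fun z hz =>
    (((differentiableAt_zpow.2 (Or.inl hz)).mul ((hF z).mul (hG z))).differentiableWithinAt)
  have hsub : {z : ℂ | 1 ≤ ‖z‖} ⊆ {0}ᶜ := fun z (hz : 1 ≤ ‖z‖) =>
    mem_compl_singleton_iff.2 (norm_pos_iff.1 (one_pos.trans_le hz))
  refine ⟨G, hG, hG0, ?_⟩
  simp only [mul_assoc]
  exact ⟨(hdiff.analyticOn isOpen_compl_singleton).mono fun z (hz : 1 < ‖z‖) => hsub hz.le,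
    integrableOn_fockIntegrand_of_isBigO (isOpen_lt continuous_const continuous_norm).measurableSet
      (isClosed_le continuous_const continuous_norm) (fun z (hz : 1 < ‖z‖) => hz.le)
      (hdiff.continuousOn.mono hsub) hg hO⟩

theorem isF0Exponent_of_finite_zeros {F : ℂ → ℂ} (hF : Differentiable ℂ F)
    (hsimple : ∀ z, F z = 0 → deriv F z ≠ 0) (hZ : {z | F z = 0}.Finite) (k : ℕ) :
    IsF0Exponent F k := by
  set T := hZ.toFinset
  obtain ⟨H, hH, hFH⟩ := exists_eq_mul_of_simple_zeros hF
    (G := fun z => ∏ q ∈ T, (z - q)) (by fun_prop) hsimple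
    fun z hz => Finset.prod_eq_zero (hZ.mem_toFinset.2 hz) (sub_self z)
  have hH0 : H ≠ 0 := fun h => prod_sub_ne_zero T (funext fun z => by simp [hFH z, h])
  refine isF0Exponent_of_isBigO hF hH hH0 (integrable_fockIntegrand_pow (#T + k)).integrableOn ?_
  have := isBigO_zpow_mul_of_mul_prod_eq (S := ∅) (T := T) (j := ((#T + k : ℕ) : ℤ)) (k := k)
    (a := fun z => F z * H z) (b := 1) (by simp) fun z => by simp [hFH z]
  convert this using 2 with z
  simp [← zpow_natCast]

theorem exists_memFock_ne_zero_vanishing {F : ℂ → ℂ} (hF : Differentiable ℂ F) (hF0 : F ≠ 0) {N : ℤ}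
    (hN : IsF0Exponent F N) {T S : Finset ℂ} (hT : ∀ q ∈ T, F q = 0) (hcard : #T + N = #S) :
    ∃ Ψ : ℂ → ℂ, MemFock Ψ ∧ Ψ ≠ 0 ∧ (∀ z, F z = 0 → z ∉ T → Ψ z = 0) ∧ ∀ p ∈ S, Ψ p = 0 := by
  obtain ⟨G, hG, hG0, hmem⟩ := hN
  obtain ⟨F', hF', hFF'⟩ := exists_eq_prod_sub_mul hF T hT
  have hF'0 : F' ≠ 0 := fun h => hF0 (funext fun z => by simp [hFF' z, h])
  set Ψ := fun z => F' z * G z * ∏ p ∈ S, (z - p)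
  have hO := isBigO_zpow_mul_of_mul_prod_eq (S := T) (T := S) (j := N) (k := 0)
    (a := Ψ) (b := fun z => F z * G z) (by simpa using hcard)
    fun z => by simp only [Ψ, hFF' z]; ring
  have hF'G : Differentiable ℂ fun z => F' z * G z := hF'.mul hG
  have hprodS : Differentiable ℂ fun z => ∏ p ∈ S, (z - p) := by fun_prop
  refine ⟨Ψ, memFock_of_isBigO (hF'G.mul hprodS) hmem.2 (by simpa [mul_assoc] using hO),
    hF'G.fun_mul_ne_zero hprodS (hF'.fun_mul_ne_zero hG hF'0 hG0) (prod_sub_ne_zero S),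
    fun z hz hzT => ?_, fun p hp => by simp [Ψ, Finset.prod_eq_zero hp (sub_self p)]⟩
  · have hprod : ∏ q ∈ T, (z - q) ≠ 0 :=
      Finset.prod_ne_zero_iff.2 fun q hq => sub_ne_zero.2 fun h => hzT (h ▸ hq)
    have : F' z = 0 := by simpa [hFF' z, hprod] using hz
    simp [Ψ, this]

theorem eq_zero_of_memFock_of_vanishing {F : ℂ → ℂ} (hF : Differentiable ℂ F)
    (hsimple : ∀ z, F z = 0 → deriv F z ≠ 0) {N : ℤ} (hN : ¬ IsF0Exponent F (N + 1))
    {T S : Finset ℂ} (hS : ∀ p ∈ S, F p ≠ 0) (hcard : #T + (N + 1) = #S) {G : ℂ → ℂ}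
    (hG : MemFock G) (hGΛ : ∀ z ∈ {z | F z = 0} \ ↑T ∪ ↑S, G z = 0) : G = 0 := by
  by_contra hG0
  have hprodT : Differentiable ℂ fun z => ∏ q ∈ T, (z - q) := by fun_prop
  obtain ⟨H₁, hH₁, hGH₁⟩ := exists_eq_mul_of_simple_zeros hF
    (G := fun z => G z * ∏ q ∈ T, (z - q)) (hG.1.mul hprodT) hsimple fun z hz => by
      by_cases hzT : z ∈ T
      · simp [Finset.prod_eq_zero hzT (sub_self z)]
      · simp [hGΛ z (Or.inl ⟨hz, hzT⟩)]
  obtain ⟨H₂, hH₂, hH₁H₂⟩ := exists_eq_prod_sub_mul hH₁ S fun p hp => by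
    simpa [hGΛ p (Or.inr hp), hS p hp] using (hGH₁ p).symm
  have hH₂0 : H₂ ≠ 0 := fun h => hG.1.fun_mul_ne_zero hprodT hG0 (prod_sub_ne_zero T)
    (funext fun z => by simp [hGH₁ z, hH₁H₂ z, h])
  refine hN (isF0Exponent_of_isBigO hF hH₂ hH₂0 hG.2.integrableOn ?_)
  have := isBigO_zpow_mul_of_mul_prod_eq (S := S) (T := T) (j := 0) (k := N + 1)
    (a := fun z => F z * H₂ z) (b := G) (by simpa using hcard.symm)
    fun z => by rw [hGH₁ z, hH₁H₂ z]; ring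
  simpa using this

theorem exists_memFock_ne_zero_vanishing_off {F : ℂ → ℂ} (hF : Differentiable ℂ F)
    (hF0 : F ≠ 0) {N : ℤ} (hN : IsF0Exponent F N) {T S : Finset ℂ} (hT : ∀ q ∈ T, F q = 0)
    (hcard : #T + (N + 1) = #S) {l : ℂ} (hl : l ∈ {z | F z = 0} \ ↑T ∪ ↑S) :
    ∃ G : ℂ → ℂ, MemFock G ∧ G ≠ 0 ∧ ∀ μ ∈ ({z | F z = 0} \ ↑T ∪ ↑S) \ {l}, G μ = 0 := by
  rcases hl with ⟨hlZ, hlT⟩ | hlS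
  · obtain ⟨Ψ, hΨ, hΨ0, hΨZ, hΨS⟩ := exists_memFock_ne_zero_vanishing hF hF0 hN
      (T := insert l T) (S := S) (Finset.forall_mem_insert _ _ _ |>.2 ⟨hlZ, hT⟩)
      (by rw [Finset.card_insert_of_notMem hlT]; push_cast; linarith)
    refine ⟨Ψ, hΨ, hΨ0, ?_⟩
    rintro μ ⟨⟨hμZ, hμT⟩ | hμS, hμl⟩
    · exact hΨZ μ hμZ (Finset.mem_insert.not.2 (not_or.2 ⟨hμl, hμT⟩))
    · exact hΨS μ hμS
  · obtain ⟨Ψ, hΨ, hΨ0, hΨZ, hΨS⟩ := exists_memFock_ne_zero_vanishing hF hF0 hN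
      (T := T) (S := S.erase l) hT
      (by have := Finset.card_pos.2 ⟨l, hlS⟩; rw [Finset.card_erase_of_mem hlS]; omega)
    refine ⟨Ψ, hΨ, hΨ0, ?_⟩
    rintro μ ⟨⟨hμZ, hμT⟩ | hμS, hμl⟩
    · exact hΨZ μ hμZ hμT
    · exact hΨS μ (Finset.mem_erase.2 ⟨hμl, hμS⟩)

/-- Lemma 1: if F is entire with simple zeros, z^m F ∈ F₀ and z^n F G ∉ F₀ for every
nonzero entire G, then adding/removing finitely many points to/from the zero set of F
yields Λ such that {k_λ}_{λ∈Λ} is complete and minimal in the Fock space (i.e. Λ is a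
uniqueness set but Λ \ {λ} never is). -/
theorem stmt14 (F : ℂ → ℂ) (hF : Differentiable ℂ F)
    (hsimple : ∀ z : ℂ, F z = 0 → deriv F z ≠ 0)
    (m n : ℤ)
    (hm : MemF0 (fun z : ℂ => z ^ m * F z))
    (hn : ∀ G : ℂ → ℂ, Differentiable ℂ G → G ≠ 0 →
      ¬ MemF0 (fun z : ℂ => z ^ n * F z * G z)) :
    ∃ Λ : Set ℂ,
      (Λ \ {z : ℂ | F z = 0}).Finite ∧ ({z : ℂ | F z = 0} \ Λ).Finite ∧
      (∀ G : ℂ → ℂ, MemFock G → (∀ l ∈ Λ, G l = 0) → G = 0) ∧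
      (∀ l ∈ Λ, ∃ G : ℂ → ℂ, MemFock G ∧ G ≠ 0 ∧ ∀ μ ∈ Λ \ {l}, G μ = 0) := by
  have hF0 : F ≠ 0 := fun h => hsimple 0 (by simp [h]) (by simp [h])
  have hn' : ¬ IsF0Exponent F n := fun ⟨G, hG, hG0, hmem⟩ => hn G hG hG0 hmem
  obtain ⟨N, hN, hNmax⟩ := Int.exists_greatest_of_bdd (P := IsF0Exponent F)
    ⟨n, fun k hk => not_lt.1 fun hnk => hn' (hk.of_le hnk.le)⟩
    ⟨m, fun _ => 1, differentiable_const 1, Function.ne_iff.2 ⟨0, one_ne_zero⟩, by simpa using hm⟩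
  have hZ : {z | F z = 0}.Infinite := fun hZ =>
    hn' ((isF0Exponent_of_finite_zeros hF hsimple hZ n.toNat).of_le (Int.self_le_toNat n))
  have hnonzero : {z | F z ≠ 0}.Infinite := by
    obtain ⟨w, hw⟩ := Function.ne_iff.1 hF0
    exact infinite_of_mem_nhds w ((isOpen_ne_fun hF.continuous continuous_const).mem_nhds hw)
  obtain ⟨T, hTZ, hT⟩ := hZ.exists_subset_card_eq (-(N + 1)).toNat
  obtain ⟨S, hSF, hS⟩ := hnonzero.exists_subset_card_eq (N + 1).toNat
  have hcard : (#T : ℤ) + (N + 1) = #S := by omega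
  refine ⟨{z | F z = 0} \ T ∪ S, S.finite_toSet.subset ?_, T.finite_toSet.subset ?_,
    fun G hG hGΛ => eq_zero_of_memFock_of_vanishing hF hsimple
      (fun h => (hNmax _ h).not_gt (lt_add_one N)) hSF hcard hG hGΛ,
    fun l hl => exists_memFock_ne_zero_vanishing_off hF hF0 hN hTZ hcard hl⟩
  · rintro z ⟨⟨hzZ, -⟩ | hzS, hz⟩
    exacts [absurd hzZ hz, hzS]
  · rintro z ⟨hzZ, hz⟩
    by_contra hzT
    exact hz (Or.inl ⟨hzZ, hzT⟩)
end

section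
/- Let n : (0,∞) → [0,∞) be nondecreasing with 2π∫₀^r n(t)/t dt = (πr² − 8r²/log r)·|sin(log log r)| + 8πr²/log r + O(log r) as r → ∞. Then n(r) = (|sin(log log r)| + o(1))·r² as r → ∞, and hence limsup_{r→∞} n(r)/(πr²) = 1/π. -/
set_option maxHeartbeats 1000000
open Real Filter MeasureTheory Set intervalIntegral


private lemma stmt18_log_le {x : ℝ} (hx : 0 ≤ x) : Real.log (1+x) ≤ x := by
  have := Real.log_le_sub_one_of_pos (show (0:ℝ) < 1 + x by linarith)
  linarith

private lemma stmt18_le_log {x : ℝ} (hx : 0 ≤ x) : x / (1+x) ≤ Real.log (1+x) := by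
  have h := Real.one_sub_inv_le_log_of_pos (show (0:ℝ) < 1 + x by linarith)
  have h1 : 1 - (1+x)⁻¹ = x / (1+x) := by field_simp; ring
  rw [h1] at h
  linarith

private lemma stmt18_sin (x y : ℝ) : abs (|Real.sin x| - |Real.sin y|) ≤ |x - y| := by
  refine (abs_abs_sub_abs_le_abs_sub _ _).trans ?_
  rw [Real.sin_sub_sin]
  calc |2 * Real.sin ((x-y)/2) * Real.cos ((x+y)/2)|
      = 2 * |Real.sin ((x-y)/2)| * |Real.cos ((x+y)/2)| := by
        rw [abs_mul, abs_mul, abs_two]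
    _ ≤ 2 * |(x-y)/2| * 1 := by
        have h1 : |Real.sin ((x-y)/2)| ≤ |(x-y)/2| := Real.abs_sin_le_abs
        have h2 := Real.abs_cos_le_one ((x+y)/2)
        have h3 := abs_nonneg (Real.sin ((x-y)/2))
        nlinarith [abs_nonneg ((x-y)/2)]
    _ ≤ |x - y| := by rw [abs_div, abs_two]; linarith [abs_nonneg (x-y)]

private lemma stmt18_intable {n : ℝ → ℝ} (hmono : MonotoneOn n (Set.Ioi 0))
    {a b : ℝ} (ha : 0 < a) (hab : a ≤ b) :
    IntervalIntegrable (fun t => n t / t) volume a b := by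
  have hsub : Set.Icc a b ⊆ Set.Ioi 0 := fun x hx => lt_of_lt_of_le ha hx.1
  have h1 : IntegrableOn n (Set.Icc a b) volume :=
    (hmono.mono hsub).integrableOn_isCompact isCompact_Icc
  have h2 : IntegrableOn (fun t => n t * t⁻¹) (Set.Icc a b) volume := by
    refine h1.mul_continuousOn ?_ isCompact_Icc
    exact ContinuousOn.inv₀ continuousOn_id (fun x hx => (lt_of_lt_of_le ha hx.1).ne')
  have h3 : IntegrableOn (fun t => n t / t) (Set.Icc a b) volume := by
    simpa [div_eq_mul_inv] using h2
  exact (h3.mono_set (Set.uIcc_subset_Icc (by simp [hab]) (by simp [hab]))).intervalIntegrable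

private lemma stmt18_div_le {a b c : ℝ} (h : a ≤ b) (hc : 0 < c) : a / c ≤ b / c := by
  gcongr

private lemma stmt18_bounds {n : ℝ → ℝ} (hmono : MonotoneOn n (Set.Ioi 0))
    {a b : ℝ} (ha : 0 < a) (hab : a ≤ b) :
    n a * (Real.log b - Real.log a) ≤ (∫ t in a..b, n t / t) ∧
    (∫ t in a..b, n t / t) ≤ n b * (Real.log b - Real.log a) := by
  have hb : 0 < b := lt_of_lt_of_le ha hab
  have h0 : (0:ℝ) ∉ Set.uIcc a b := by
    rw [Set.uIcc_of_le hab]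
    intro h; exact absurd h.1 (not_le.mpr ha)
  have hii : IntervalIntegrable (fun t => n t / t) volume a b := stmt18_intable hmono ha hab
  have hconst : ∀ c : ℝ, IntervalIntegrable (fun t => c / t) volume a b := by
    intro c
    apply ContinuousOn.intervalIntegrable
    exact ContinuousOn.div continuousOn_const continuousOn_id
      (fun x hx => ((Set.uIcc_of_le hab ▸ hx).1.trans_lt' ha).ne')
  have hval : ∀ c : ℝ, (∫ t in a..b, c / t) = c * (Real.log b - Real.log a) := by
    intro c
    have : (∫ t in a..b, c / t) = c * ∫ t in a..b, 1 / t := by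
      rw [← intervalIntegral.integral_const_mul]
      congr 1; ext t; ring
    rw [this, integral_one_div h0, Real.log_div hb.ne' ha.ne']
  constructor
  · rw [← hval (n a)]
    apply intervalIntegral.integral_mono_on hab (hconst (n a)) hii
    intro t ht
    have htpos : 0 < t := lt_of_lt_of_le ha ht.1
    exact stmt18_div_le (hmono ha htpos ht.1) htpos
  · rw [← hval (n b)]
    apply intervalIntegral.integral_mono_on hab hii (hconst (n b))
    intro t ht
    have htpos : 0 < t := lt_of_lt_of_le ha ht.1
    exact stmt18_div_le (hmono htpos hb ht.2) htpos

private lemma stmt18_split {n : ℝ → ℝ} (hmono : MonotoneOn n (Set.Ioi 0))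
    {r₁ a b : ℝ} (h2 : 0 < r₁)
    (hint : IntegrableOn (fun t => n t / t) (Set.Ioc 0 r₁) volume)
    (h1a : r₁ ≤ a) (hab : a ≤ b) :
    (∫ t in (0:ℝ)..b, n t / t) - (∫ t in (0:ℝ)..a, n t / t) = ∫ t in a..b, n t / t := by
  have ha : 0 < a := lt_of_lt_of_le h2 h1a
  have hi0a : IntervalIntegrable (fun t => n t / t) volume 0 a := by
    rw [intervalIntegrable_iff_integrableOn_Ioc_of_le ha.le]
    have h1 : IntegrableOn (fun t => n t / t) (Set.Ioc r₁ a) volume := by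
      have := stmt18_intable hmono h2 h1a
      rw [intervalIntegrable_iff_integrableOn_Ioc_of_le h1a] at this
      exact this
    have := hint.union h1
    rwa [Set.Ioc_union_Ioc_eq_Ioc h2.le h1a] at this
  have hiab : IntervalIntegrable (fun t => n t / t) volume a b := stmt18_intable hmono ha hab
  have := intervalIntegral.integral_add_adjacent_intervals hi0a hiab
  linarith

private lemma stmt18_eps {a b : ℝ} (h : ∀ η : ℝ, 0 < η → a ≤ b + η) : a ≤ b := by
  by_contra hc
  push_neg at hc
  have := h ((a-b)/2) (by linarith)
  linarith


private lemma stmt18_deg (n : ℝ → ℝ) (C R₀ : ℝ)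
    (hJ : ∀ r : ℝ, R₀ ≤ r → |2 * Real.pi * (∫ t in (0:ℝ)..r, n t / t) -
        ((Real.pi * r ^ 2 - 8 * r ^ 2 / Real.log r) * |Real.sin (Real.log (Real.log r))| +
          8 * Real.pi * r ^ 2 / Real.log r)| ≤ C * Real.log r)
    (hC : 0 ≤ C)
    (hnint : ¬ IntegrableOn (fun t => n t / t) (Set.Ioc 0 (max R₀ 2)) volume) : False := by
  set r : ℝ := max (max R₀ 21) (C/6+1) with hr
  have hr21 : (21:ℝ) ≤ r := le_trans (le_max_right R₀ 21) (le_max_left _ _)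
  have hrR₀ : R₀ ≤ r := le_trans (le_max_left R₀ 21) (le_max_left _ _)
  have hrpos : (0:ℝ) < r := by linarith
  have hrC : C/6 + 1 ≤ r := le_max_right _ _
  have hni : ¬ IntegrableOn (fun t => n t / t) (Set.Ioc 0 r) volume := by
    intro h
    exact hnint (h.mono_set (Set.Ioc_subset_Ioc_right (max_le hrR₀ (by linarith))))
  have hzero : (∫ t in (0:ℝ)..r, n t / t) = 0 := by
    rw [intervalIntegral.integral_of_le hrpos.le]
    exact MeasureTheory.integral_undef hni
  have hJr := hJ r hrR₀
  rw [hzero] at hJr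
  have hL3 : (3:ℝ) ≤ Real.log r := by
    rw [Real.le_log_iff_exp_le hrpos]
    have h1 : Real.exp 1 < 2.7182818286 := Real.exp_one_lt_d9
    have h3 : Real.exp 3 = Real.exp 1 * Real.exp 1 * Real.exp 1 := by
      rw [← Real.exp_add, ← Real.exp_add]; norm_num
    nlinarith [Real.exp_pos 1]
  have hLpos : (0:ℝ) < Real.log r := by linarith
  set u : ℝ := Real.sqrt r with hu
  have hupos : 0 < u := Real.sqrt_pos.mpr hrpos
  have hu2 : u * u = r := Real.mul_self_sqrt hrpos.le
  have hLu : Real.log r ≤ 2 * u := by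
    have h1 : Real.log u ≤ u - 1 := Real.log_le_sub_one_of_pos hupos
    have h2 : Real.log u = Real.log r / 2 := by rw [hu, Real.log_sqrt hrpos.le]
    linarith
  set σ := |Real.sin (Real.log (Real.log r))| with hσ
  have hσ0 : 0 ≤ σ := abs_nonneg _
  have hσ1 : σ ≤ 1 := abs_le.mpr ⟨Real.neg_one_le_sin _, Real.sin_le_one _⟩
  have hπ := Real.pi_gt_three
  have hcoef : 0 ≤ Real.pi * r^2 - 8*r^2/Real.log r := by
    rw [sub_nonneg, div_le_iff₀ hLpos]
    nlinarith [mul_nonneg (mul_nonneg (by linarith : (0:ℝ) ≤ Real.pi - 3)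
      (by linarith : (0:ℝ) ≤ Real.log r - 3)) (sq_nonneg r),
      mul_nonneg (by linarith : (0:ℝ) ≤ Real.log r - 3) (sq_nonneg r),
      mul_nonneg (by linarith : (0:ℝ) ≤ Real.pi - 3) (sq_nonneg r), sq_nonneg r]
  set X := (Real.pi * r ^ 2 - 8 * r ^ 2 / Real.log r) * σ + 8 * Real.pi * r ^ 2 / Real.log r with hX
  have hXle : X ≤ C * Real.log r := by
    have h1 : |(0:ℝ) * (2*Real.pi) - X| ≤ C * Real.log r := by
      rw [hX]
      convert hJr using 2
      ring
    have h2 : X ≤ |(0:ℝ)*(2*Real.pi) - X| := by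
      rw [zero_mul, zero_sub, abs_neg]
      exact le_abs_self X
    linarith
  have hq : u^3/2 ≤ r^2/Real.log r := by
    rw [div_le_div_iff₀ (by norm_num) hLpos]
    nlinarith [pow_pos hupos 3]
  have hXge : 12 * u^3 ≤ X := by
    have h1 : 0 ≤ (Real.pi * r ^ 2 - 8 * r ^ 2 / Real.log r) * σ := mul_nonneg hcoef hσ0
    have h2' : 24 * r^2 ≤ 8*Real.pi*r^2 := by nlinarith [sq_nonneg r]
    have h2 : 24 * (r^2/Real.log r) ≤ 8 * Real.pi * r ^ 2 / Real.log r :=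
      calc 24*(r^2/Real.log r) = (24*r^2)/Real.log r := by ring
        _ ≤ (8*Real.pi*r^2)/Real.log r := stmt18_div_le h2' hLpos
        _ = 8 * Real.pi * r ^ 2 / Real.log r := by ring
    rw [hX]
    linarith
  have hCL : C * Real.log r ≤ 2 * C * u := by nlinarith [mul_le_mul_of_nonneg_left hLu hC]
  nlinarith [hu2, mul_le_mul_of_nonneg_left hrC hupos.le, hupos]

private lemma stmt18_key (n : ℝ → ℝ)
    (hmono : MonotoneOn n (Set.Ioi 0))
    (C R₀ : ℝ)
    (hJ : ∀ r : ℝ, R₀ ≤ r → |2 * Real.pi * (∫ t in (0:ℝ)..r, n t / t) -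
        ((Real.pi * r ^ 2 - 8 * r ^ 2 / Real.log r) * |Real.sin (Real.log (Real.log r))| +
          8 * Real.pi * r ^ 2 / Real.log r)| ≤ C * Real.log r)
    (hC : 0 ≤ C)
    (hint : IntegrableOn (fun t => n t / t) (Set.Ioc 0 (max R₀ 2)) volume)
    {ε : ℝ} (hε : 0 < ε) (hε1 : ε ≤ 1) :
    ∀ᶠ r in atTop, abs (n r / r ^ 2 - |Real.sin (Real.log (Real.log r))|) ≤ 6 * ε := by
  have hπ3 := Real.pi_gt_three
  have hπ : (0:ℝ) < Real.pi := by linarith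
  have h1ε : (0:ℝ) < 1 + ε := by linarith
  obtain ⟨δ, hδdef⟩ : ∃ δ : ℝ, δ = Real.log (1+ε) := ⟨_, rfl⟩
  have hδpos : 0 < δ := hδdef ▸ Real.log_pos (by linarith)
  have hδle : δ ≤ ε := hδdef ▸ stmt18_log_le hε.le
  have hδge : ε ≤ δ * (1+ε) := by
    have h := stmt18_le_log hε.le
    rw [div_le_iff₀ h1ε, ← hδdef] at h
    linarith
  have hδ2 : ε ≤ 2*δ := by nlinarith
  obtain ⟨r₁, hr₁def⟩ : ∃ r₁ : ℝ, r₁ = max R₀ 2 := ⟨_, rfl⟩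
  rw [← hr₁def] at hint
  have hr₁2 : (2:ℝ) ≤ r₁ := hr₁def ▸ le_max_right _ _
  have hr₁R₀ : R₀ ≤ r₁ := hr₁def ▸ le_max_left _ _
  have hr₁pos : (0:ℝ) < r₁ := by linarith
  obtain ⟨K, hKdef⟩ : ∃ K : ℝ, K = 6/ε + 48/(δ*ε) + 3 := ⟨_, rfl⟩
  have hK3 : (3:ℝ) ≤ K := by
    have h1 : (0:ℝ) ≤ 6/ε := by positivity
    have h2 : (0:ℝ) ≤ 48/(δ*ε) := by positivity
    rw [hKdef]; linarith
  have E2 : ∀ᶠ r : ℝ in atTop, K ≤ Real.log (r/(1+ε)) := by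
    have ht : Tendsto (fun r : ℝ => Real.log (r/(1+ε))) atTop atTop :=
      Real.tendsto_log_atTop.comp (Tendsto.atTop_div_const h1ε tendsto_id)
    exact ht.eventually_ge_atTop K
  filter_upwards [eventually_ge_atTop (r₁*(1+ε)), E2, eventually_ge_atTop (2*C/(δ*ε) + 1)]
    with r hr1 hrK hrC
  obtain ⟨a, hadef⟩ : ∃ a : ℝ, a = r/(1+ε) := ⟨_, rfl⟩
  obtain ⟨b, hbdef⟩ : ∃ b : ℝ, b = (1+ε)*r := ⟨_, rfl⟩
  rw [← hadef] at hrK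
  have har : a*(1+ε) = r := by rw [hadef]; exact div_mul_cancel₀ r h1ε.ne'
  have hr₁a : r₁ ≤ a := by
    rw [hadef, le_div_iff₀ h1ε]; exact hr1
  have hapos : 0 < a := lt_of_lt_of_le hr₁pos hr₁a
  have hrpos : 0 < r := by nlinarith only [har, hapos, hε]
  have hra : a ≤ r := by nlinarith only [har, hapos, hε]
  have hrb : r ≤ b := by nlinarith only [hbdef, hrpos, hε]
  have hbpos : 0 < b := by nlinarith only [hbdef, hrpos, hε]
  have hr2 : (2:ℝ) ≤ r := le_trans hr₁2 (le_trans hr₁a hra)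
  have hR₀r : R₀ ≤ r := le_trans hr₁R₀ (le_trans hr₁a hra)
  have hR₀a : R₀ ≤ a := le_trans hr₁R₀ hr₁a
  have hR₀b : R₀ ≤ b := le_trans hR₀r hrb
  -- logs
  have hLa3 : 3 ≤ Real.log a := le_trans hK3 hrK
  have hLapos : 0 < Real.log a := by linarith only [hLa3]
  have hLaLr : Real.log a ≤ Real.log r := Real.log_le_log hapos hra
  have hLrpos : 0 < Real.log r := by linarith only [hLa3, hLaLr]
  have hLrLb : Real.log r ≤ Real.log b := Real.log_le_log hrpos hrb
  have hLbpos : 0 < Real.log b := by linarith only [hLrpos, hLrLb]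
  have hLb : Real.log b = δ + Real.log r := by
    rw [hbdef, Real.log_mul h1ε.ne' hrpos.ne', hδdef]
  have hLr : Real.log r = δ + Real.log a := by
    conv_lhs => rw [← har]
    rw [Real.log_mul hapos.ne' h1ε.ne', hδdef]; ring
  have hLrr : Real.log r ≤ r := Real.log_le_self hrpos.le
  -- quantitative log conditions
  have hεLa : 6 ≤ Real.log a * ε := by
    have h1 : 6/ε ≤ Real.log a := by
      rw [hKdef] at hrK
      have h2 : (0:ℝ) ≤ 48/(δ*ε) := by positivity
      linarith only [hrK, h2]
    exact (div_le_iff₀ hε).mp h1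
  have hδεLa : 48 ≤ Real.log a * (δ*ε) := by
    have h1 : 48/(δ*ε) ≤ Real.log a := by
      rw [hKdef] at hrK
      have h2 : (0:ℝ) ≤ 6/ε := by positivity
      linarith only [hrK, h2]
    exact (div_le_iff₀ (by positivity)).mp h1
  have hεLr : 6 ≤ Real.log r * ε := by
    have h1 := mul_le_mul_of_nonneg_right hLaLr hε.le
    linarith only [hεLa, h1]
  have hδεLb : 48 ≤ Real.log b * (δ*ε) := by
    have h1 := mul_le_mul_of_nonneg_right (le_trans hLaLr hLrLb) (by positivity : (0:ℝ) ≤ δ*ε)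
    linarith only [hδεLa, h1]
  have hCr' : 2*C ≤ δ*ε*r := by
    have h1 : 2*C/(δ*ε) ≤ r - 1 := by linarith only [hrC]
    rw [div_le_iff₀ (by positivity)] at h1
    have h3 : (r-1)*(δ*ε) = δ*ε*r - δ*ε := by ring
    have h4 : 0 < δ*ε := mul_pos hδpos hε
    linarith only [h1, h3, h4]
  -- sin facts
  have hσr0 : 0 ≤ |Real.sin (Real.log (Real.log r))| := abs_nonneg _
  have hσr1 : |Real.sin (Real.log (Real.log r))| ≤ 1 :=
    abs_le.mpr ⟨Real.neg_one_le_sin _, Real.sin_le_one _⟩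
  have hσa0 : 0 ≤ |Real.sin (Real.log (Real.log a))| := abs_nonneg _
  have hσb0 : 0 ≤ |Real.sin (Real.log (Real.log b))| := abs_nonneg _
  have P5 : |Real.sin (Real.log (Real.log b))| ≤ |Real.sin (Real.log (Real.log r))| + δ / Real.log r := by
    have h1 := stmt18_sin (Real.log (Real.log b)) (Real.log (Real.log r))
    have h2 : Real.log (Real.log b) - Real.log (Real.log r) = Real.log (Real.log b / Real.log r) := by
      rw [Real.log_div hLbpos.ne' hLrpos.ne']
    have h3 : 0 ≤ Real.log (Real.log b / Real.log r) :=
      Real.log_nonneg (by rw [le_div_iff₀ hLrpos]; linarith only [hLrLb])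
    have h4 : Real.log (Real.log b / Real.log r) ≤ δ / Real.log r := by
      have h5 := Real.log_le_sub_one_of_pos (show 0 < Real.log b / Real.log r by positivity)
      have h6 : Real.log b / Real.log r - 1 = δ / Real.log r := by
        field_simp
        linarith only [hLb]
      linarith only [h5, h6]
    have h7 := le_abs_self (|Real.sin (Real.log (Real.log b))| - |Real.sin (Real.log (Real.log r))|)
    rw [h2] at h1
    rw [abs_of_nonneg h3] at h1
    linarith only [h1, h4, h7]
  have Q5 : |Real.sin (Real.log (Real.log a))| ≤ |Real.sin (Real.log (Real.log r))| + δ / Real.log a := by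
    have h1 := stmt18_sin (Real.log (Real.log a)) (Real.log (Real.log r))
    have h2 : Real.log (Real.log a) - Real.log (Real.log r) = -Real.log (Real.log r / Real.log a) := by
      rw [Real.log_div hLrpos.ne' hLapos.ne']; ring
    have h3 : 0 ≤ Real.log (Real.log r / Real.log a) :=
      Real.log_nonneg (by rw [le_div_iff₀ hLapos]; linarith only [hLaLr])
    have h4 : Real.log (Real.log r / Real.log a) ≤ δ / Real.log a := by
      have h5 := Real.log_le_sub_one_of_pos (show 0 < Real.log r / Real.log a by positivity)
      have h6 : Real.log r / Real.log a - 1 = δ / Real.log a := by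
        field_simp
        linarith only [hLr]
      linarith only [h5, h6]
    have h7 := le_abs_self (|Real.sin (Real.log (Real.log a))| - |Real.sin (Real.log (Real.log r))|)
    rw [h2, abs_neg, abs_of_nonneg h3] at h1
    linarith only [h1, h4, h7]
  -- Jensen hypothesis at a, r, b
  have hJr := abs_le.mp (hJ r hR₀r)
  have hJb := abs_le.mp (hJ b hR₀b)
  have hJa := abs_le.mp (hJ a hR₀a)
  -- integral comparisons
  have hP1 : n r * δ ≤ ∫ t in r..b, n t / t := by
    have h1 := (stmt18_bounds hmono hrpos hrb).1
    have h2 : Real.log b - Real.log r = δ := by rw [hLb]; ring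
    rwa [h2] at h1
  have hQ1 : (∫ t in a..r, n t / t) ≤ n r * δ := by
    have h1 := (stmt18_bounds hmono hapos hra).2
    have h2 : Real.log r - Real.log a = δ := by rw [hLr]; ring
    rwa [h2] at h1
  have hP2 : (∫ t in (0:ℝ)..b, n t / t) - (∫ t in (0:ℝ)..r, n t / t) = ∫ t in r..b, n t / t :=
    stmt18_split hmono hr₁pos hint (le_trans hr₁a hra) hrb
  have hQ2 : (∫ t in (0:ℝ)..r, n t / t) - (∫ t in (0:ℝ)..a, n t / t) = ∫ t in a..r, n t / t :=
    stmt18_split hmono hr₁pos hint hr₁a hra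
  -- Phi comparisons
  have h0b : (0:ℝ) ≤ 8*b^2/Real.log b := div_nonneg (by positivity) hLbpos.le
  have h0a : (0:ℝ) ≤ 8*a^2/Real.log a := div_nonneg (by positivity) hLapos.le
  have h0r : (0:ℝ) ≤ 8*r^2/Real.log r := div_nonneg (by positivity) hLrpos.le
  have hP6 : (Real.pi * b ^ 2 - 8 * b ^ 2 / Real.log b) * |Real.sin (Real.log (Real.log b))| ≤
      Real.pi * b ^ 2 * |Real.sin (Real.log (Real.log b))| :=
    mul_le_mul_of_nonneg_right (by linarith only [h0b]) hσb0
  have hQ6 : (Real.pi * a ^ 2 - 8 * a ^ 2 / Real.log a) * |Real.sin (Real.log (Real.log a))| ≤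
      Real.pi * a ^ 2 * |Real.sin (Real.log (Real.log a))| :=
    mul_le_mul_of_nonneg_right (by linarith only [h0a]) hσa0
  have hP7 : Real.pi * r ^ 2 * |Real.sin (Real.log (Real.log r))| ≤
      (Real.pi * r ^ 2 - 8 * r ^ 2 / Real.log r) * |Real.sin (Real.log (Real.log r))| +
        8 * Real.pi * r ^ 2 / Real.log r := by
    have h1 : (8*r^2/Real.log r) * |Real.sin (Real.log (Real.log r))| ≤ (8*r^2/Real.log r) * 1 :=
      mul_le_mul_of_nonneg_left hσr1 h0r
    have h2 : 8*r^2/Real.log r ≤ 8*Real.pi*r^2/Real.log r :=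
      stmt18_div_le (mul_le_mul_of_nonneg_right (by linarith only [hπ3] : (8:ℝ) ≤ 8*Real.pi) (sq_nonneg r)) hLrpos
    linarith only [h1, h2]
  -- size facts
  have hr2a : r^2 = a^2*(1+ε)^2 := by rw [← har]; ring
  have ha2r : a^2 ≤ r^2 := by
    have := mul_le_mul hra hra hapos.le hrpos.le
    nlinarith only [this]
  have hb2 : b^2 ≤ 4*r^2 := by
    have h1 : (1+ε)^2 ≤ 4 := by nlinarith only [hε, hε1, mul_le_mul_of_nonneg_left hε1 hε.le]
    have h2 := mul_le_mul_of_nonneg_right h1 (sq_nonneg r)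
    rw [hbdef]
    nlinarith only [h2]
  have hdLr : δ/Real.log r ≤ δ*ε/6 := by
    rw [div_le_div_iff₀ hLrpos (by norm_num : (0:ℝ) < 6)]
    have := mul_le_mul_of_nonneg_left hεLr hδpos.le
    linarith only [this]
  have hdLa : δ/Real.log a ≤ δ*ε/6 := by
    rw [div_le_div_iff₀ hLapos (by norm_num : (0:ℝ) < 6)]
    have := mul_le_mul_of_nonneg_left hεLa hδpos.le
    linarith only [this]
  -- term bounds (upper chain)
  have hT1 : Real.pi*b^2*(δ/Real.log r) ≤ Real.pi*δ*ε*r^2 := by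
    have h1 : b^2*(δ/Real.log r) ≤ (4*r^2)*(δ*ε/6) :=
      mul_le_mul hb2 hdLr (by positivity) (by positivity)
    linarith only [mul_le_mul_of_nonneg_left h1 hπ.le,
      (by positivity : (0:ℝ) ≤ Real.pi*δ*ε*r^2)]
  have hT2 : 8*Real.pi*b^2/Real.log b ≤ Real.pi*δ*ε*r^2 := by
    rw [div_le_iff₀ hLbpos]
    linarith only [mul_le_mul_of_nonneg_left hδεLb (by positivity : (0:ℝ) ≤ Real.pi*r^2),
      mul_le_mul_of_nonneg_left hb2 (by positivity : (0:ℝ) ≤ 8*Real.pi),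
      (by positivity : (0:ℝ) ≤ Real.pi*r^2)]
  have hT3 : C*(Real.log b + Real.log r) ≤ Real.pi*δ*ε*r^2 := by
    have h1 : Real.log b + Real.log r ≤ 3*r := by
      rw [hLb]
      linarith only [hδle, hε1, hLrr, hr2]
    have h2 := mul_le_mul_of_nonneg_left h1 hC
    linarith only [h2, mul_le_mul_of_nonneg_right hCr' hrpos.le,
      mul_nonneg (mul_nonneg (mul_nonneg (by linarith only [hπ3] : (0:ℝ) ≤ Real.pi - 2) hδpos.le) hε.le) (sq_nonneg r),
      (by positivity : (0:ℝ) ≤ δ*ε*r^2)]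
  -- sigma coefficient bound (upper)
  have hcε : (1+ε)^2 - 1 - 2*δ ≤ 4*ε^2 := by
    have h1 := mul_le_mul_of_nonneg_right hδle hε.le
    linarith only [hδge, h1, sq_nonneg ε]
  have hSc : b^2 - r^2 - 2*δ*r^2 ≤ 4*ε^2*r^2 := by
    have h1 := mul_le_mul_of_nonneg_left hcε (sq_nonneg r)
    rw [hbdef]
    nlinarith only [h1]
  have hF : 4*ε^2*r^2 ≤ 8*δ*ε*r^2 := by
    have h1 := mul_le_mul_of_nonneg_right hδ2 (mul_nonneg hε.le (sq_nonneg r))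
    linarith only [h1]
  have hS : |Real.sin (Real.log (Real.log r))| * (b^2 - r^2 - 2*δ*r^2) ≤ 8*δ*ε*r^2 := by
    rcases le_or_gt 0 (b^2 - r^2 - 2*δ*r^2) with h|h
    · have h1 := mul_le_mul_of_nonneg_right hσr1 h
      linarith only [h1, hF, hSc]
    · have h1 := mul_le_mul_of_nonneg_left h.le hσr0
      linarith only [h1, (by positivity : (0:ℝ) ≤ 8*δ*ε*r^2)]
  -- assemble upper bound
  have hP1' := mul_le_mul_of_nonneg_left hP1 (by positivity : (0:ℝ) ≤ 2*Real.pi)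
  have hP2' : 2*Real.pi*(∫ t in (0:ℝ)..b, n t / t) - 2*Real.pi*(∫ t in (0:ℝ)..r, n t / t)
      = 2*Real.pi*(∫ t in r..b, n t / t) := by rw [← hP2]; ring
  have hP5' := mul_le_mul_of_nonneg_left P5 (by positivity : (0:ℝ) ≤ Real.pi*b^2)
  have hSπ := mul_le_mul_of_nonneg_left hS hπ.le
  have Hup : 2*Real.pi*δ*(n r) ≤
      2*Real.pi*δ*((|Real.sin (Real.log (Real.log r))|) * r^2) + 12*Real.pi*δ*ε*r^2 := by
    linarith only [hP1', hP2', hJb.2, hJr.1, hP6, hP7, hP5', hT1, hT2, hT3, hSπ,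
      (by positivity : (0:ℝ) ≤ Real.pi*δ*ε*r^2)]
  have hr2pos : (0:ℝ) < r^2 := by positivity
  have hup : n r / r ^ 2 - |Real.sin (Real.log (Real.log r))| ≤ 6*ε := by
    have h2 : (0:ℝ) < 2*Real.pi*δ := by positivity
    have h3 : 2*Real.pi*δ * n r ≤
        2*Real.pi*δ * ((|Real.sin (Real.log (Real.log r))|) * r^2 + 6*ε*r^2) := by
      linarith only [Hup]
    have h4 := le_of_mul_le_mul_left h3 h2
    rw [sub_le_iff_le_add, div_le_iff₀ hr2pos]
    linarith only [h4]
  -- lower chain term bounds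
  have hT1' : Real.pi*a^2*(δ/Real.log a) ≤ Real.pi*δ*ε*r^2/6 := by
    have h1 : a^2*(δ/Real.log a) ≤ r^2*(δ*ε/6) :=
      mul_le_mul ha2r hdLa (by positivity) (sq_nonneg r)
    linarith only [mul_le_mul_of_nonneg_left h1 hπ.le]
  have hT2' : 8*Real.pi*a^2/Real.log a ≤ Real.pi*δ*ε*r^2/6 := by
    rw [div_le_iff₀ hLapos]
    linarith only [mul_le_mul_of_nonneg_left hδεLa (by positivity : (0:ℝ) ≤ Real.pi*r^2/6),
      mul_le_mul_of_nonneg_left ha2r (by positivity : (0:ℝ) ≤ 8*Real.pi)]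
  have hT3' : C*(Real.log r + Real.log a) ≤ Real.pi*δ*ε*r^2/3 := by
    have h1 : Real.log r + Real.log a ≤ 2*r := by
      linarith only [hLaLr, hLrr]
    have h2 := mul_le_mul_of_nonneg_left h1 hC
    linarith only [h2, mul_le_mul_of_nonneg_right hCr' hrpos.le,
      mul_nonneg (mul_nonneg (mul_nonneg (by linarith only [hπ3] : (0:ℝ) ≤ Real.pi - 3) hδpos.le) hε.le) (sq_nonneg r)]
  -- sigma coefficient (lower)
  have hkey : (0:ℝ) ≤ (1+ε)*(δ*(1+ε)-ε) := mul_nonneg h1ε.le (by linarith only [hδge])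
  have hq2 : 0 ≤ 2*δ*(1+ε)^2 - (1+ε)^2 + 1 := by
    have h1 := mul_le_mul_of_nonneg_right hδge h1ε.le
    linarith only [h1, sq_nonneg ε]
  have hc0 : 0 ≤ 2*δ*r^2 - r^2 + a^2 := by
    have e1 : 2*δ*r^2 - r^2 + a^2 = a^2*(2*δ*(1+ε)^2 - (1+ε)^2 + 1) := by rw [hr2a]; ring
    rw [e1]
    exact mul_nonneg (sq_nonneg a) hq2
  have hc5 : 2*δ*r^2 - r^2 + a^2 ≤ 5*ε^2*r^2 := by
    have e1 : 2*δ*r^2 - r^2 + a^2 = a^2*(2*δ*(1+ε)^2 - (1+ε)^2 + 1) := by rw [hr2a]; ring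
    have e2 : 5*ε^2*r^2 = a^2*(5*ε^2*(1+ε)^2) := by rw [hr2a]; ring
    rw [e1, e2]
    refine mul_le_mul_of_nonneg_left ?_ (sq_nonneg a)
    have h1 := mul_le_mul_of_nonneg_right hδle (by positivity : (0:ℝ) ≤ 2*(1+ε)^2)
    linarith only [h1, sq_nonneg ε,
      (by positivity : (0:ℝ) ≤ ε^2), (by positivity : (0:ℝ) ≤ ε^3), (by positivity : (0:ℝ) ≤ ε^4)]
  have hF' : 5*ε^2*r^2 ≤ 10*δ*ε*r^2 := by
    have h1 := mul_le_mul_of_nonneg_right hδ2 (mul_nonneg hε.le (sq_nonneg r))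
    linarith only [h1]
  have hS' : |Real.sin (Real.log (Real.log r))| * (2*δ*r^2 - r^2 + a^2) ≤ 10*δ*ε*r^2 := by
    have h1 := mul_le_mul_of_nonneg_right hσr1 hc0
    linarith only [h1, hc5, hF']
  -- assemble lower bound
  have hQ1' := mul_le_mul_of_nonneg_left hQ1 (by positivity : (0:ℝ) ≤ 2*Real.pi)
  have hQ2' : 2*Real.pi*(∫ t in (0:ℝ)..r, n t / t) - 2*Real.pi*(∫ t in (0:ℝ)..a, n t / t)
      = 2*Real.pi*(∫ t in a..r, n t / t) := by rw [← hQ2]; ring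
  have hQ5' := mul_le_mul_of_nonneg_left Q5 (by positivity : (0:ℝ) ≤ Real.pi*a^2)
  have hS'π := mul_le_mul_of_nonneg_left hS' hπ.le
  have Hlo : 2*Real.pi*δ*((|Real.sin (Real.log (Real.log r))|) * r^2) ≤
      2*Real.pi*δ*(n r) + 12*Real.pi*δ*ε*r^2 := by
    linarith only [hQ1', hQ2', hJr.1, hJa.2, hQ6, hP7, hQ5', hT1', hT2', hT3', hS'π,
      (by positivity : (0:ℝ) ≤ Real.pi*δ*ε*r^2)]
  have hlo : |Real.sin (Real.log (Real.log r))| - n r / r ^ 2 ≤ 6*ε := by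
    have h2 : (0:ℝ) < 2*Real.pi*δ := by positivity
    have h3 : 2*Real.pi*δ * ((|Real.sin (Real.log (Real.log r))|) * r^2) ≤
        2*Real.pi*δ * (n r + 6*ε*r^2) := by
      linarith only [Hlo]
    have h4 := le_of_mul_le_mul_left h3 h2
    rw [sub_le_iff_le_add]
    have h5 : |Real.sin (Real.log (Real.log r))| ≤ (6*ε*r^2 + n r)/r^2 := by
      rw [le_div_iff₀ hr2pos]
      linarith only [h4]
    have h6 : (6*ε*r^2 + n r)/r^2 = 6*ε + n r / r^2 := by
      field_simp

    rw [h6] at h5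
    exact h5
  exact abs_le.mpr ⟨by linarith only [hlo], hup⟩

/-- If n is nondecreasing, nonnegative on (0,∞), and
2π∫₀^r n(t)/t dt = (πr² - 8r²/log r)|sin(log log r)| + 8πr²/log r + O(log r), then
n(r) = (|sin(log log r)| + o(1))r², and hence limsup_{r→∞} n(r)/(πr²) = 1/π. -/
theorem stmt18 (n : ℝ → ℝ)
    (hmono : MonotoneOn n (Set.Ioi 0))
    (hpos : ∀ t : ℝ, 0 < t → 0 ≤ n t)
    (C R₀ : ℝ)
    (hJ : ∀ r : ℝ, R₀ ≤ r →
      |2 * Real.pi * (∫ t in (0 : ℝ)..r, n t / t) -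
        ((Real.pi * r ^ 2 - 8 * r ^ 2 / Real.log r) * |Real.sin (Real.log (Real.log r))| +
          8 * Real.pi * r ^ 2 / Real.log r)| ≤ C * Real.log r) :
    Filter.Tendsto (fun r : ℝ => n r / r ^ 2 - |Real.sin (Real.log (Real.log r))|)
      Filter.atTop (nhds 0) ∧
    Filter.limsup (fun r : ℝ => n r / (Real.pi * r ^ 2)) Filter.atTop = 1 / Real.pi := by
  have hπ : (0:ℝ) < Real.pi := Real.pi_pos
  have hC : 0 ≤ C := by
    have h := hJ (max R₀ 3) (le_max_left _ _)
    have h3 : (1:ℝ) < max R₀ 3 := lt_of_lt_of_le (by norm_num) (le_max_right _ _)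
    have hlog : 0 < Real.log (max R₀ 3) := Real.log_pos h3
    have h0 := abs_nonneg (2 * Real.pi * (∫ t in (0:ℝ)..(max R₀ 3), n t / t) -
        ((Real.pi * (max R₀ 3) ^ 2 - 8 * (max R₀ 3) ^ 2 / Real.log (max R₀ 3)) *
          |Real.sin (Real.log (Real.log (max R₀ 3)))| +
          8 * Real.pi * (max R₀ 3) ^ 2 / Real.log (max R₀ 3)))
    nlinarith only [h, h0, hlog]
  by_cases hint : IntegrableOn (fun t => n t / t) (Set.Ioc 0 (max R₀ 2)) volume
  swap
  · exact (stmt18_deg n C R₀ hJ hC hint).elim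
  have key : ∀ ε : ℝ, 0 < ε → ε ≤ 1 →
      ∀ᶠ r in atTop, abs (n r / r ^ 2 - |Real.sin (Real.log (Real.log r))|) ≤ 6 * ε :=
    fun ε hε hε1 => stmt18_key n hmono C R₀ hJ hC hint hε hε1
  have part1 : Filter.Tendsto (fun r : ℝ => n r / r ^ 2 - |Real.sin (Real.log (Real.log r))|)
      Filter.atTop (nhds 0) := by
    rw [Metric.tendsto_nhds]
    intro η hη
    have h1 := key (min (η/7) 1) (by positivity) (min_le_right _ _)
    filter_upwards [h1] with r hr
    rw [Real.dist_eq, sub_zero]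
    have h2 := min_le_left (η/7) 1
    have h0 : 0 < min (η/7) 1 := by positivity
    calc abs (n r / r ^ 2 - |Real.sin (Real.log (Real.log r))|) ≤ 6 * min (η/7) 1 := hr
      _ < η := by linarith
  refine ⟨part1, ?_⟩
  -- upper eventual bound
  have hub : ∀ ε : ℝ, 0 < ε → ε ≤ 1 →
      ∀ᶠ r : ℝ in atTop, n r / (Real.pi * r ^ 2) ≤ (1 + 6*ε)/Real.pi := by
    intro ε hε hε1
    filter_upwards [key ε hε hε1, eventually_gt_atTop (0:ℝ)] with r h hr0
    have hσ1 : |Real.sin (Real.log (Real.log r))| ≤ 1 :=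
      abs_le.mpr ⟨Real.neg_one_le_sin _, Real.sin_le_one _⟩
    have h2 : n r / r^2 ≤ 1 + 6*ε := by
      have := (abs_le.mp h).2
      linarith
    have e : n r / (Real.pi * r ^ 2) = (n r / r^2)/Real.pi := by
      ring
    rw [e]
    exact stmt18_div_le h2 hπ
  -- lower frequent bound
  have hlbf : ∀ ε : ℝ, 0 < ε → ε ≤ 1 →
      ∃ᶠ r : ℝ in atTop, (1 - 6*ε)/Real.pi ≤ n r / (Real.pi * r ^ 2) := by
    intro ε hε hε1
    rw [frequently_atTop]
    intro R
    have hk := key ε hε hε1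
    rw [eventually_atTop] at hk
    obtain ⟨R', hR'⟩ := hk
    have htend : Tendsto (fun k : ℕ => Real.exp (Real.exp (Real.pi/2 + 2*Real.pi*k))) atTop atTop := by
      apply Real.tendsto_exp_atTop.comp
      apply Real.tendsto_exp_atTop.comp
      apply tendsto_atTop_add_const_left
      exact (tendsto_natCast_atTop_atTop (R := ℝ)).const_mul_atTop (by positivity)
    obtain ⟨k, hk1⟩ : ∃ k : ℕ, max R R' ≤ Real.exp (Real.exp (Real.pi/2 + 2*Real.pi*k)) :=
      (htend.eventually_ge_atTop _).exists
    refine ⟨Real.exp (Real.exp (Real.pi/2 + 2*Real.pi*k)), le_trans (le_max_left _ _) hk1, ?_⟩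
    have hσ : |Real.sin (Real.log (Real.log (Real.exp (Real.exp (Real.pi/2 + 2*Real.pi*k)))))| = 1 := by
      rw [Real.log_exp, Real.log_exp]
      rw [show Real.pi/2 + 2*Real.pi*(k:ℝ) = Real.pi/2 + (k:ℝ)*(2*Real.pi) by ring]
      rw [Real.sin_add_nat_mul_two_pi, Real.sin_pi_div_two]
      exact abs_one
    have h := hR' _ (le_trans (le_max_right _ _) hk1)
    rw [hσ] at h
    have h2 : 1 - 6*ε ≤ n (Real.exp (Real.exp (Real.pi/2 + 2*Real.pi*k))) /
        (Real.exp (Real.exp (Real.pi/2 + 2*Real.pi*k)))^2 := by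
      have := (abs_le.mp h).1
      linarith
    have e : n (Real.exp (Real.exp (Real.pi/2 + 2*Real.pi*k))) /
        (Real.pi * (Real.exp (Real.exp (Real.pi/2 + 2*Real.pi*k)))^2)
        = (n (Real.exp (Real.exp (Real.pi/2 + 2*Real.pi*k))) /
          (Real.exp (Real.exp (Real.pi/2 + 2*Real.pi*k)))^2)/Real.pi := by
      ring
    rw [e]
    exact stmt18_div_le h2 hπ
  -- boundedness
  have hbd : IsBoundedUnder (· ≤ ·) atTop (fun r : ℝ => n r / (Real.pi * r ^ 2)) :=
    isBoundedUnder_of_eventually_le (a := (1 + 6*1)/Real.pi)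
      (hub 1 one_pos le_rfl)
  have hcb : IsCoboundedUnder (· ≤ ·) atTop (fun r : ℝ => n r / (Real.pi * r ^ 2)) := by
    apply isCoboundedUnder_le_of_eventually_le atTop (x := 0)
    filter_upwards [eventually_gt_atTop (0:ℝ)] with r hr
    have := hpos r hr
    positivity
  refine le_antisymm ?_ ?_
  · apply stmt18_eps
    intro η hη
    obtain ⟨ε, hε, hε1, hεη⟩ : ∃ ε : ℝ, 0 < ε ∧ ε ≤ 1 ∧ 6*ε/Real.pi ≤ η := by
      refine ⟨min 1 (Real.pi*η/6), by positivity, min_le_left _ _, ?_⟩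
      rw [div_le_iff₀ hπ]
      have := min_le_right 1 (Real.pi*η/6)
      nlinarith only [this, hπ, hη]
    have h2 : Filter.limsup (fun r : ℝ => n r / (Real.pi * r ^ 2)) Filter.atTop ≤ (1+6*ε)/Real.pi :=
      limsup_le_of_le hcb (hub ε hε hε1)
    have e : (1+6*ε)/Real.pi = 1/Real.pi + 6*ε/Real.pi := by ring
    linarith
  · apply stmt18_eps
    intro η hη
    obtain ⟨ε, hε, hε1, hεη⟩ : ∃ ε : ℝ, 0 < ε ∧ ε ≤ 1 ∧ 6*ε/Real.pi ≤ η := by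
      refine ⟨min 1 (Real.pi*η/6), by positivity, min_le_left _ _, ?_⟩
      rw [div_le_iff₀ hπ]
      have := min_le_right 1 (Real.pi*η/6)
      nlinarith only [this, hπ, hη]
    have h2 : (1-6*ε)/Real.pi ≤ Filter.limsup (fun r : ℝ => n r / (Real.pi * r ^ 2)) Filter.atTop :=
      le_limsup_of_frequently_le (hlbf ε hε hε1) hbd
    have e : (1-6*ε)/Real.pi = 1/Real.pi - 6*ε/Real.pi := by ring
    linarith
end
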